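/- arXiv:1403.8133 — 7 statements merged into one kernel-verified Lean document; each statement's English description precedes it below -/
import Mathlib

section
/- Let 0 < k < n and let I = (i_1 < ⋯ < i_k) and J = (j_1 < ⋯ < j_k) be elements of V_{k,n}. Then I and J are nonnesting if and only if they are comparable in the componentwise order, i.e., i_a ≤ j_a for all a ∈ {1,…,k} or j_a ≤ i_a for all a ∈ {1,…,k}. -/
/-- Two arcs `(i < i')` and `(j < j')` cross if `i < j < i' < j'` or `j < i < j' < i'`. -/
def Cross (i i' j j' : ℕ) : Prop :=
  (i < j ∧ j < i' ∧ i' < j') ∨ (j < i ∧ i < j' ∧ j' < i')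

/-- Two arcs `(i < i')` and `(j < j')` nest if `i < j < j' < i'` or `j < i < i' < j'`. -/
def Nest (i i' j j' : ℕ) : Prop :=
  (i < j ∧ j < j' ∧ j' < i') ∨ (j < i ∧ i < i' ∧ i' < j')

/-- `I : Fin k → ℕ` represents an element of `V_{k,n}`: a strictly increasing
`k`-tuple with entries in `[n] = {1, …, n}`. -/
def IsVkn (n : ℕ) {k : ℕ} (I : Fin k → ℕ) : Prop :=
  StrictMono I ∧ ∀ a, 1 ≤ I a ∧ I a ≤ n

/-- `I, J ∈ V_{k,n}` are noncrossing if for all indices `a < b` such that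
`I l = J l` for all `a < l < b`, the arcs `(I a < I b)` and `(J a < J b)` do not cross. -/
def NonCrossing {k : ℕ} (I J : Fin k → ℕ) : Prop :=
  ∀ a b : Fin k, a < b → (∀ l : Fin k, a < l → l < b → I l = J l) →
    ¬ Cross (I a) (I b) (J a) (J b)

/-- `I, J ∈ V_{k,n}` are nonnesting if for all indices `a < b`
the arcs `(I a < I b)` and `(J a < J b)` do not nest. -/
def NonNesting {k : ℕ} (I J : Fin k → ℕ) : Prop :=
  ∀ a b : Fin k, a < b → ¬ Nest (I a) (I b) (J a) (J b)

/-- `x` is an entry of the tuple `I` (i.e. `x` belongs to `I` viewed as a subset of `[n]`). -/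
def MemT {k : ℕ} (I : Fin k → ℕ) (x : ℕ) : Prop := ∃ a, I a = x

/-- `I, J ∈ V_{k,n}` are nonnesting if and only if they are comparable
in the componentwise order. -/
theorem stmt0 {n k : ℕ} (hk : 0 < k) (hkn : k < n)
    (I J : Fin k → ℕ) (hI : IsVkn n I) (hJ : IsVkn n J) :
    NonNesting I J ↔ ((∀ a, I a ≤ J a) ∨ (∀ a, J a ≤ I a)) := by
  constructor
  · intro h
    by_contra hc
    push_neg at hc
    obtain ⟨⟨a, ha⟩, ⟨b, hb⟩⟩ := hc
    rcases lt_trichotomy a b with hab | hab | hab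
    · exact h a b hab (Or.inr ⟨ha, hI.1 hab, hb⟩)
    · exact absurd (hab ▸ ha) (not_lt.mpr (le_of_lt hb))
    · exact h b a hab (Or.inl ⟨hb, hJ.1 hab, ha⟩)
  · rintro (hle | hle) a b hab hnest
    · rcases hnest with ⟨h1, h2, h3⟩ | ⟨h1, h2, h3⟩
      · exact absurd h3 (not_lt.mpr (hle b))
      · exact absurd h1 (not_lt.mpr (hle a))
    · rcases hnest with ⟨h1, h2, h3⟩ | ⟨h1, h2, h3⟩
      · exact absurd h1 (not_lt.mpr (hle a))
      · exact absurd h3 (not_lt.mpr (hle b))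
end

section
/- Let 0 < k < n. For I ∈ V_{k,n}, viewed as a k-element subset of [n], let I^c ∈ V_{n−k,n} be the increasing enumeration of the complement [n] \ I. Then for all I, J ∈ V_{k,n}, the tuples I and J are noncrossing in V_{k,n} if and only if I^c and J^c are noncrossing in V_{n−k,n}. In other words, complementation induces an isomorphism between the noncrossing relation on V_{k,n} and on V_{n−k,n}. -/
namespace NCAux

variable {k : ℕ}

/-- number of entries of `I` that are `≤ x`. -/
def cnt (I : Fin k → ℕ) (x : ℕ) : ℕ := (Finset.univ.filter fun a => I a ≤ x).card

lemma cnt_le_k (I : Fin k → ℕ) (x : ℕ) : cnt I x ≤ k := by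
  classical
  exact (Finset.card_filter_le _ _).trans (by simp)

lemma cnt_mono (I : Fin k → ℕ) {x y : ℕ} (hxy : x ≤ y) : cnt I x ≤ cnt I y := by
  apply Finset.card_le_card
  intro a ha
  simp only [Finset.mem_filter, Finset.mem_univ, true_and] at ha ⊢
  omega

lemma lt_cnt_iff {I : Fin k → ℕ} (hI : StrictMono I) (l : Fin k) (x : ℕ) :
    (l : ℕ) < cnt I x ↔ I l ≤ x := by
  constructor
  · intro h
    by_contra hc
    push_neg at hc
    have hsub : (Finset.univ.filter fun a : Fin k => I a ≤ x) ⊆ Finset.Iio l := by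
      intro a ha
      simp only [Finset.mem_filter, Finset.mem_univ, true_and] at ha
      simp only [Finset.mem_Iio]
      by_contra hal
      push_neg at hal
      exact absurd (le_trans (hI.monotone hal) ha) (by omega)
    have := Finset.card_le_card hsub
    rw [Fin.card_Iio] at this
    unfold cnt at h
    omega
  · intro h
    have hsub : Finset.Iic l ⊆ (Finset.univ.filter fun a : Fin k => I a ≤ x) := by
      intro a ha
      simp only [Finset.mem_Iic] at ha
      simp only [Finset.mem_filter, Finset.mem_univ, true_and]
      exact le_trans (hI.monotone ha) h
    have := Finset.card_le_card hsub
    rw [Fin.card_Iic] at this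
    unfold cnt
    omega

lemma cnt_succ {I : Fin k → ℕ} (hI : Function.Injective I) (x : ℕ) :
    (MemT I (x + 1) ∧ cnt I (x + 1) = cnt I x + 1) ∨
      (¬ MemT I (x + 1) ∧ cnt I (x + 1) = cnt I x) := by
  classical
  have hsplit : (Finset.univ.filter fun a : Fin k => I a ≤ x + 1) =
      (Finset.univ.filter fun a : Fin k => I a ≤ x) ∪
        (Finset.univ.filter fun a : Fin k => I a = x + 1) := by
    ext a
    simp only [Finset.mem_filter, Finset.mem_univ, true_and, Finset.mem_union]
    omega
  have hdisj : Disjoint (Finset.univ.filter fun a : Fin k => I a ≤ x)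
      (Finset.univ.filter fun a : Fin k => I a = x + 1) := by
    rw [Finset.disjoint_left]
    intro a ha hb
    simp only [Finset.mem_filter, Finset.mem_univ, true_and] at ha hb
    omega
  have hcard : cnt I (x+1) = cnt I x +
      (Finset.univ.filter fun a : Fin k => I a = x + 1).card := by
    unfold cnt
    rw [hsplit, Finset.card_union_of_disjoint hdisj]
  by_cases hm : MemT I (x + 1)
  · left
    refine ⟨hm, ?_⟩
    obtain ⟨a, ha⟩ := hm
    have : (Finset.univ.filter fun b : Fin k => I b = x + 1) = {a} := by
      ext b
      simp only [Finset.mem_filter, Finset.mem_univ, true_and, Finset.mem_singleton]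
      constructor
      · intro hb; exact hI (hb.trans ha.symm)
      · intro hb; rw [hb, ha]
    rw [hcard, this, Finset.card_singleton]
  · right
    refine ⟨hm, ?_⟩
    have : (Finset.univ.filter fun b : Fin k => I b = x + 1) = ∅ := by
      ext b
      simp only [Finset.mem_filter, Finset.mem_univ, true_and, Finset.notMem_empty, iff_false]
      exact fun hb => hm ⟨b, hb⟩
    rw [hcard, this, Finset.card_empty]
    omega

/-- the prefix-count difference function. -/
def fdiff (I J : Fin k → ℕ) (x : ℕ) : ℤ := (cnt I x : ℤ) - (cnt J x : ℤ)

/-- the crossing pattern of the count-difference function. -/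
def Pat (g : ℕ → ℤ) : Prop :=
  ∃ u v : ℕ, u + 1 < v ∧ 0 < g u ∧ 0 < g v ∧ ∀ t, u < t → t < v → g t = 0

lemma cnt_eq_of {J : Fin k → ℕ} (hJ : StrictMono J) {x c : ℕ} (hc : c ≤ k)
    (h : ∀ m : Fin k, J m ≤ x ↔ (m : ℕ) < c) : cnt J x = c := by
  rcases lt_trichotomy (cnt J x) c with h' | h' | h'
  · exfalso
    have hck : cnt J x < k := lt_of_lt_of_le h' hc
    have : J ⟨cnt J x, hck⟩ ≤ x := (h ⟨cnt J x, hck⟩).2 h'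
    have := (lt_cnt_iff hJ ⟨cnt J x, hck⟩ x).2 this
    simp at this
  · exact h'
  · exfalso
    have hck : c < k := lt_of_lt_of_le h' (cnt_le_k J x)
    have : J ⟨c, hck⟩ ≤ x := (lt_cnt_iff hJ ⟨c, hck⟩ x).1 h'
    have := (h ⟨c, hck⟩).1 this
    simp at this

lemma pat_cross {I J : Fin k → ℕ} (hI : StrictMono I) (hJ : StrictMono J)
    (h : Pat (fdiff I J)) : ¬ NonCrossing I J := by
  obtain ⟨u, v, huv, hu, hv, hmid⟩ := h
  have h0 : fdiff I J (u + 1) = 0 := hmid _ (Nat.lt_succ_self u) huv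
  have hu' : cnt J u < cnt I u := by unfold fdiff at hu; omega
  have h0' : cnt I (u + 1) = cnt J (u + 1) := by unfold fdiff at h0; omega
  rcases cnt_succ hI.injective u with ⟨hImem, eI⟩ | ⟨hImem, eI⟩ <;>
    rcases cnt_succ hJ.injective u with ⟨hJmem, eJ⟩ | ⟨hJmem, eJ⟩
  rotate_left 3
  · omega
  · omega
  · omega
  have hfu : cnt I u = cnt J u + 1 := by omega
  -- at v
  set w := v - 1 with hwdef
  have hw : w + 1 = v := by omega
  have h0w : fdiff I J w = 0 := hmid w (by omega) (by omega)
  have hv' : cnt J v < cnt I v := by unfold fdiff at hv; omega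
  have h0w' : cnt I w = cnt J w := by unfold fdiff at h0w; omega
  have sIv := cnt_succ hI.injective w
  have sJv := cnt_succ hJ.injective w
  rw [hw] at sIv sJv
  rcases sIv with ⟨hImv, eIv⟩ | ⟨hImv, eIv⟩ <;> rcases sJv with ⟨hJmv, eJv⟩ | ⟨hJmv, eJv⟩
  rotate_left 2
  · omega
  · omega
  · omega
  obtain ⟨a, ha⟩ := hJmem
  obtain ⟨b, hb⟩ := hImv
  have haJ : (a : ℕ) = cnt J u := by
    have h1 : (a : ℕ) < cnt J (u + 1) := (lt_cnt_iff hJ a (u + 1)).2 (le_of_eq ha)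
    have h2 : ¬ (a : ℕ) < cnt J u := fun hlt => by
      have := (lt_cnt_iff hJ a u).1 hlt; omega
    omega
  have hIa : I a ≤ u := (lt_cnt_iff hI a u).1 (by omega)
  have hbI : (b : ℕ) = cnt I w := by
    have h1 : (b : ℕ) < cnt I v := (lt_cnt_iff hI b v).2 (le_of_eq hb)
    have h2 : ¬ (b : ℕ) < cnt I w := fun hlt => by
      have := (lt_cnt_iff hI b w).1 hlt; omega
    omega
  have hJb : v < J b := by
    by_contra hc
    push_neg at hc
    have := (lt_cnt_iff hJ b v).2 hc
    omega
  have hmono : cnt J (u + 1) ≤ cnt J w := cnt_mono J (by omega)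
  have hab : a < b := by
    rw [Fin.lt_def]
    omega
  intro hNC
  refine hNC a b hab ?_ ?_
  · intro l hal hlb
    have hal' : (a : ℕ) < (l : ℕ) := Fin.lt_def.1 hal
    have hlb' : (l : ℕ) < (b : ℕ) := Fin.lt_def.1 hlb
    have hIl : u + 1 < I l := by
      by_contra hc
      push_neg at hc
      have := (lt_cnt_iff hI l (u + 1)).2 hc
      omega
    have hJl : u + 1 < J l := by
      by_contra hc
      push_neg at hc
      have := (lt_cnt_iff hJ l (u + 1)).2 hc
      omega
    have hIl2 : I l ≤ w := (lt_cnt_iff hI l w).1 (by omega)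
    have hJl2 : J l ≤ w := (lt_cnt_iff hJ l w).1 (by omega)
    have hfIl : fdiff I J (I l) = 0 := hmid _ (by omega) (by omega)
    have hfJl : fdiff I J (J l) = 0 := hmid _ (by omega) (by omega)
    have c1 : (l : ℕ) < cnt I (I l) := (lt_cnt_iff hI l (I l)).2 le_rfl
    have c2 : cnt J (I l) = cnt I (I l) := by unfold fdiff at hfIl; omega
    have c3 : J l ≤ I l := (lt_cnt_iff hJ l (I l)).1 (by omega)
    have c4 : (l : ℕ) < cnt J (J l) := (lt_cnt_iff hJ l (J l)).2 le_rfl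
    have c5 : cnt I (J l) = cnt J (J l) := by unfold fdiff at hfJl; omega
    have c6 : I l ≤ J l := (lt_cnt_iff hI l (J l)).1 (by omega)
    omega
  · exact Or.inl ⟨by omega, by omega, by omega⟩

lemma cross_pat {I J : Fin k → ℕ} (hI : StrictMono I) (hJ : StrictMono J)
    (hJ1 : ∀ m, 1 ≤ J m) (a b : Fin k) (hab : a < b)
    (hmid : ∀ l : Fin k, a < l → l < b → I l = J l)
    (h1 : I a < J a) (h2 : J a < I b) (h3 : I b < J b) : Pat (fdiff I J) := by
  have hab' : (a : ℕ) < (b : ℕ) := Fin.lt_def.1 hab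
  refine ⟨J a - 1, I b, by have := hJ1 a; omega, ?_, ?_, ?_⟩
  · -- fdiff at J a - 1 is positive
    have hcJ : cnt J (J a - 1) = (a : ℕ) := by
      apply cnt_eq_of hJ (le_of_lt a.isLt)
      intro m
      constructor
      · intro hm
        have : J m < J a := by omega
        exact Fin.lt_def.1 (hJ.lt_iff_lt.1 this)
      · intro hm
        have : J m < J a := hJ (Fin.lt_def.2 hm)
        omega
    have hcI : (a : ℕ) < cnt I (J a - 1) := (lt_cnt_iff hI a _).2 (by omega)
    unfold fdiff
    omega
  · -- fdiff at I b is positive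
    have hcJ : cnt J (I b) = (b : ℕ) := by
      apply cnt_eq_of hJ (le_of_lt b.isLt)
      intro m
      constructor
      · intro hm
        by_contra hc
        push_neg at hc
        have : J b ≤ J m := hJ.monotone (Fin.le_def.2 hc)
        omega
      · intro hm
        rcases lt_or_ge (a : ℕ) (m : ℕ) with hma | hma
        · have := hmid m (Fin.lt_def.2 hma) (Fin.lt_def.2 hm)
          have : I m < I b := hI (Fin.lt_def.2 hm)
          omega
        · have : J m ≤ J a := hJ.monotone (Fin.le_def.2 hma)
          omega
    have hcI : (b : ℕ) < cnt I (I b) := (lt_cnt_iff hI b _).2 le_rfl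
    unfold fdiff
    omega
  · -- fdiff vanishes strictly between
    intro t hta htb
    have hfil : ∀ m : Fin k, I m ≤ t ↔ J m ≤ t := by
      intro m
      rcases le_or_gt (m : ℕ) (a : ℕ) with hma | hma
      · have e1 : I m ≤ I a := hI.monotone (Fin.le_def.2 hma)
        have e2 : J m ≤ J a := hJ.monotone (Fin.le_def.2 hma)
        constructor <;> intro <;> omega
      · rcases lt_or_ge (m : ℕ) (b : ℕ) with hmb | hmb
        · rw [hmid m (Fin.lt_def.2 hma) (Fin.lt_def.2 hmb)]
        · have e1 : I b ≤ I m := hI.monotone (Fin.le_def.2 hmb)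
          have e2 : J b ≤ J m := hJ.monotone (Fin.le_def.2 hmb)
          constructor <;> intro <;> omega
    have : cnt I t = cnt J t := by
      unfold cnt
      congr 1
      apply Finset.filter_congr
      intro m _
      simp [hfil m]
    unfold fdiff
    omega

lemma cross_symm {i i' j j' : ℕ} (h : Cross i i' j j') : Cross j j' i i' := by
  unfold Cross at *; tauto

lemma noncrossing_symm {I J : Fin k → ℕ} (h : NonCrossing I J) : NonCrossing J I := by
  intro a b hab hmid hc
  exact h a b hab (fun l h1 h2 => (hmid l h1 h2).symm) (cross_symm hc)

lemma not_noncrossing_iff {I J : Fin k → ℕ} (hI : StrictMono I) (hJ : StrictMono J)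
    (hI1 : ∀ m, 1 ≤ I m) (hJ1 : ∀ m, 1 ≤ J m) :
    ¬ NonCrossing I J ↔ (Pat (fdiff I J) ∨ Pat (fdiff J I)) := by
  constructor
  · intro h
    unfold NonCrossing at h
    push_neg at h
    obtain ⟨a, b, hab, hmid, hc⟩ := h
    rcases hc with ⟨c1, c2, c3⟩ | ⟨c1, c2, c3⟩
    · exact Or.inl (cross_pat hI hJ hJ1 a b hab hmid c1 c2 c3)
    · exact Or.inr (cross_pat hJ hI hI1 a b hab (fun l p q => (hmid l p q).symm) c1 c2 c3)
  · intro h hNC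
    rcases h with h | h
    · exact pat_cross hI hJ h hNC
    · exact pat_cross hJ hI h (noncrossing_symm hNC)

instance {k' : ℕ} (L : Fin k' → ℕ) : DecidablePred (MemT L) :=
  fun x => decidable_of_iff (∃ a, L a = x) Iff.rfl

lemma cnt_icc {n k' : ℕ} {L : Fin k' → ℕ} (hL : StrictMono L)
    (hLb : ∀ a, 1 ≤ L a ∧ L a ≤ n) (x : ℕ) :
    cnt L x = ((Finset.Icc 1 (min x n)).filter fun y => MemT L y).card := by
  apply Finset.card_bij (fun a _ => L a)
  · intro a ha
    simp only [Finset.mem_filter, Finset.mem_univ, true_and] at ha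
    simp only [Finset.mem_filter, Finset.mem_Icc]
    exact ⟨⟨(hLb a).1, le_min ha (hLb a).2⟩, ⟨a, rfl⟩⟩
  · intro a₁ _ a₂ _ h
    exact hL.injective h
  · intro y hy
    simp only [Finset.mem_filter, Finset.mem_Icc] at hy
    obtain ⟨⟨hy1, hy2⟩, a, ha⟩ := hy
    refine ⟨a, ?_, ha⟩
    simp only [Finset.mem_filter, Finset.mem_univ, true_and]
    omega

lemma cnt_compl {n k' m : ℕ} {K : Fin k' → ℕ} {Kc : Fin m → ℕ}
    (hK : IsVkn n K) (hKc : IsVkn n Kc)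
    (hcompl : ∀ x, 1 ≤ x → x ≤ n → (MemT Kc x ↔ ¬ MemT K x)) (x : ℕ) :
    cnt Kc x + cnt K x = min x n := by
  rw [cnt_icc hK.1 hK.2 x, cnt_icc hKc.1 hKc.2 x]
  have hcong : ((Finset.Icc 1 (min x n)).filter fun y => MemT Kc y) =
      ((Finset.Icc 1 (min x n)).filter fun y => ¬ MemT K y) := by
    apply Finset.filter_congr
    intro y hy
    simp only [Finset.mem_Icc] at hy
    exact hcompl y hy.1 (le_trans hy.2 (min_le_right x n))
  rw [hcong, Nat.add_comm]
  rw [Finset.card_filter_add_card_filter_not (fun y => MemT K y)]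
  simp [Nat.card_Icc]

end NCAux

open NCAux

/-- complementation `I ↦ [n] \ I` induces an isomorphism between the
noncrossing relation on `V_{k,n}` and on `V_{n−k,n}`.  Here `Ic` (resp. `Jc`) is the
increasing enumeration of the complement of `I` (resp. `J`) in `[n]`, characterized
by being an element of `V_{n-k,n}` whose entries are exactly the elements of `[n]`
that are not entries of `I` (resp. `J`). -/
theorem stmt2 {n k : ℕ} (hk : 0 < k) (hkn : k < n)
    (I J : Fin k → ℕ) (hI : IsVkn n I) (hJ : IsVkn n J)
    (Ic Jc : Fin (n - k) → ℕ) (hIc : IsVkn n Ic) (hJc : IsVkn n Jc)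
    (hIcompl : ∀ x, 1 ≤ x → x ≤ n → (MemT Ic x ↔ ¬ MemT I x))
    (hJcompl : ∀ x, 1 ≤ x → x ≤ n → (MemT Jc x ↔ ¬ MemT J x)) :
    NonCrossing I J ↔ NonCrossing Ic Jc := by
  have hfc : fdiff Ic Jc = fdiff J I := by
    funext x
    have e1 := cnt_compl hI hIc hIcompl x
    have e2 := cnt_compl hJ hJc hJcompl x
    unfold fdiff
    omega
  have hfc' : fdiff Jc Ic = fdiff I J := by
    funext x
    have e1 := cnt_compl hI hIc hIcompl x
    have e2 := cnt_compl hJ hJc hJcompl x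
    unfold fdiff
    omega
  rw [← not_iff_not,
    not_noncrossing_iff hI.1 hJ.1 (fun m => (hI.2 m).1) (fun m => (hJ.2 m).1),
    not_noncrossing_iff hIc.1 hJc.1 (fun m => (hIc.2 m).1) (fun m => (hJc.2 m).1),
    hfc, hfc']
  exact or_comm
end

section
/- Let 0 < k < n, let b ∈ [n], and let τ : [n] \ {b} → [n−1] be the unique order-preserving bijection. Then: (1) if I, J ∈ V_{k,n} both contain b (as k-subsets of [n]), then I and J are noncrossing in V_{k,n} if and only if τ(I \ {b}) and τ(J \ {b}), viewed as elements of V_{k−1,n−1}, are noncrossing in V_{k−1,n−1}; (2) if I, J ∈ V_{k,n} both do not contain b, then I and J are noncrossing in V_{k,n} if and only if τ(I) and τ(J), viewed as elements of V_{k,n−1}, are noncrossing in V_{k,n−1}. -/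
/-! ### Auxiliary machinery -/

lemma tau_lt_iff {b : ℕ} {τ : ℕ → ℕ} (hτ : ∀ x, τ x = if x < b then x else x - 1)
    {x y : ℕ} (hx : x ≠ b) (hy : y ≠ b) : τ x < τ y ↔ x < y := by
  rw [hτ x, hτ y]; split_ifs <;> omega

lemma tau_eq_iff {b : ℕ} {τ : ℕ → ℕ} (hτ : ∀ x, τ x = if x < b then x else x - 1)
    {x y : ℕ} (hx : x ≠ b) (hy : y ≠ b) : τ x = τ y ↔ x = y := by
  rw [hτ x, hτ y]; split_ifs <;> omega

lemma cross_tau {b : ℕ} {τ : ℕ → ℕ} (hτ : ∀ x, τ x = if x < b then x else x - 1)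
    {x x' y y' : ℕ} (hx : x ≠ b) (hx' : x' ≠ b) (hy : y ≠ b) (hy' : y' ≠ b) :
    Cross (τ x) (τ x') (τ y) (τ y') ↔ Cross x x' y y' := by
  unfold Cross
  rw [tau_lt_iff hτ hx hy, tau_lt_iff hτ hy hx', tau_lt_iff hτ hx' hy',
    tau_lt_iff hτ hy hx, tau_lt_iff hτ hx hy', tau_lt_iff hτ hy' hx']

lemma nc_symm {k : ℕ} {I J : Fin k → ℕ} (h : NonCrossing I J) : NonCrossing J I := by
  intro a c hac hgap hcr
  refine h a c hac (fun l h1 h2 => (hgap l h1 h2).symm) ?_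
  unfold Cross at hcr ⊢
  tauto

def skipF {k : ℕ} (p : ℕ) (l : Fin (k - 1)) : Fin k :=
  if (l : ℕ) < p then ⟨l, by have := l.isLt; omega⟩ else ⟨(l : ℕ) + 1, by have := l.isLt; omega⟩

lemma skipF_val {k p : ℕ} (l : Fin (k - 1)) :
    ((skipF p l : Fin k) : ℕ) = if (l : ℕ) < p then (l : ℕ) else (l : ℕ) + 1 := by
  unfold skipF; split_ifs <;> rfl

/-- Identification of the deleted tuple. -/
lemma ident {k b : ℕ} (τ : ℕ → ℕ) (hτ : ∀ x, τ x = if x < b then x else x - 1)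
    {I : Fin k → ℕ} {I' : Fin (k - 1) → ℕ}
    (hI : StrictMono I) (hI' : StrictMono I')
    (pf : Fin k) (hpf : I pf = b)
    (hspec : ∀ y, MemT I' y ↔ ∃ x, MemT I x ∧ x ≠ b ∧ τ x = y) :
    ∀ l, I' l = τ (I (skipF (pf : ℕ) l)) := by
  simp only [MemT] at hspec
  have hne : ∀ m : Fin k, (m : ℕ) ≠ (pf : ℕ) → I m ≠ b := by
    intro m hm h
    exact hm (congrArg Fin.val (hI.injective (h.trans hpf.symm)))
  have hskne : ∀ l : Fin (k - 1), ((skipF (pf : ℕ) l : Fin k) : ℕ) ≠ (pf : ℕ) := by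
    intro l; rw [skipF_val]; split_ifs <;> omega
  have hmono : StrictMono (fun l => τ (I (skipF (pf : ℕ) l))) := by
    intro l l' h
    have h' : (l : ℕ) < (l' : ℕ) := h
    have hsk : ((skipF (pf : ℕ) l : Fin k) : ℕ) < ((skipF (pf : ℕ) l' : Fin k) : ℕ) := by
      rw [skipF_val, skipF_val]; split_ifs <;> omega
    exact (tau_lt_iff hτ (hne _ (hskne l)) (hne _ (hskne l'))).mpr (hI (Fin.lt_def.mpr hsk))
  have hrange : Set.range I' = Set.range (fun l => τ (I (skipF (pf : ℕ) l))) := by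
    ext y
    simp only [Set.mem_range]
    rw [hspec y]
    constructor
    · rintro ⟨x, ⟨m, rfl⟩, hxb, rfl⟩
      have hm : (m : ℕ) ≠ (pf : ℕ) := fun h => hxb (by
        have h2 : m = pf := Fin.ext h
        rw [h2, hpf])
      by_cases hlt : (m : ℕ) < (pf : ℕ)
      · have hmk : (m : ℕ) < k - 1 := by have := pf.isLt; omega
        refine ⟨⟨m, hmk⟩, ?_⟩
        have he : skipF (pf : ℕ) (⟨m, hmk⟩ : Fin (k - 1)) = m := by
          apply Fin.ext
          rw [skipF_val, if_pos (show ((⟨(m : ℕ), hmk⟩ : Fin (k - 1)) : ℕ) < (pf : ℕ) from hlt)]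
        rw [he]
      · have h1 : 1 ≤ (m : ℕ) := by omega
        have hmk : (m : ℕ) - 1 < k - 1 := by have := m.isLt; omega
        refine ⟨⟨(m : ℕ) - 1, hmk⟩, ?_⟩
        have he : skipF (pf : ℕ) (⟨(m : ℕ) - 1, hmk⟩ : Fin (k - 1)) = m := by
          apply Fin.ext
          rw [skipF_val,
            if_neg (show ¬ ((⟨(m : ℕ) - 1, hmk⟩ : Fin (k - 1)) : ℕ) < (pf : ℕ) from by
              show ¬ ((m : ℕ) - 1 < (pf : ℕ)); omega)]
          show (m : ℕ) - 1 + 1 = (m : ℕ); omega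
        rw [he]
    · rintro ⟨l, rfl⟩
      exact ⟨I (skipF (pf : ℕ) l), ⟨_, rfl⟩, hne _ (hskne l), rfl⟩
  haveI : WellFoundedLT (Fin (k - 1)) := inferInstance
  have he := (StrictMono.range_inj (β := Fin (k - 1)) (γ := ℕ) hI' hmono).mp hrange
  intro l; exact congrFun he l

lemma ident2 {k b : ℕ} (τ : ℕ → ℕ) (hτ : ∀ x, τ x = if x < b then x else x - 1)
    {I : Fin k → ℕ} {I' : Fin k → ℕ}
    (hI : StrictMono I) (hI' : StrictMono I') (hb : ¬ MemT I b)
    (hspec : ∀ y, MemT I' y ↔ ∃ x, MemT I x ∧ τ x = y) :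
    ∀ l, I' l = τ (I l) := by
  simp only [MemT] at hspec
  have hne : ∀ m, I m ≠ b := fun m h => hb ⟨m, h⟩
  have hmono : StrictMono (fun l => τ (I l)) :=
    fun l l' h => (tau_lt_iff hτ (hne l) (hne l')).mpr (hI h)
  have hrange : Set.range I' = Set.range (fun l => τ (I l)) := by
    ext y
    simp only [Set.mem_range]
    rw [hspec y]
    constructor
    · rintro ⟨x, ⟨m, rfl⟩, rfl⟩; exact ⟨m, rfl⟩
    · rintro ⟨l, rfl⟩; exact ⟨I l, ⟨l, rfl⟩, rfl⟩
  haveI : WellFoundedLT (Fin k) := inferInstance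
  have he := (StrictMono.range_inj (β := Fin k) (γ := ℕ) hI' hmono).mp hrange
  intro l; exact congrFun he l

lemma core2 {k b : ℕ} (τ : ℕ → ℕ) (hτ : ∀ x, τ x = if x < b then x else x - 1)
    {I J I' J' : Fin k → ℕ}
    (hIb : ∀ m, I m ≠ b) (hJb : ∀ m, J m ≠ b)
    (hI' : ∀ l, I' l = τ (I l)) (hJ' : ∀ l, J' l = τ (J l)) :
    NonCrossing I J ↔ NonCrossing I' J' := by
  constructor
  · intro h a c hac hgap hcr
    rw [hI' a, hI' c, hJ' a, hJ' c] at hcr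
    refine h a c hac ?_ ((cross_tau hτ (hIb a) (hIb c) (hJb a) (hJb c)).mp hcr)
    intro l h1 h2
    have hg := hgap l h1 h2
    rw [hI' l, hJ' l] at hg
    exact (tau_eq_iff hτ (hIb l) (hJb l)).mp hg
  · intro h a c hac hgap hcr
    refine h a c hac ?_ ?_
    · intro l h1 h2; rw [hI' l, hJ' l]; exact congrArg τ (hgap l h1 h2)
    · rw [hI' a, hI' c, hJ' a, hJ' c]
      exact (cross_tau hτ (hIb a) (hIb c) (hJb a) (hJb c)).mpr hcr

lemma core {k b : ℕ} (τ : ℕ → ℕ) (hτ : ∀ x, τ x = if x < b then x else x - 1)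
    {p q : ℕ} (hp : p < k) (hq : q < k) (hpq : p ≤ q)
    {I J : Fin k → ℕ} {I' J' : Fin (k - 1) → ℕ}
    (hI : StrictMono I) (hJ : StrictMono J)
    (hIp : I ⟨p, hp⟩ = b) (hJq : J ⟨q, hq⟩ = b)
    (hI' : ∀ l, I' l = τ (I (skipF p l)))
    (hJ' : ∀ l, J' l = τ (J (skipF q l))) :
    NonCrossing I J ↔ NonCrossing I' J' := by
  have vI : ∀ m : Fin k, ((m : ℕ) < p → I m < b) ∧ ((m : ℕ) = p → I m = b) ∧
      (p < (m : ℕ) → b < I m) := by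
    intro m
    refine ⟨fun h => ?_, fun h => ?_, fun h => ?_⟩
    · have := hI (a := m) (b := ⟨p, hp⟩) (Fin.lt_def.mpr h); omega
    · have h2 : m = ⟨p, hp⟩ := Fin.ext h; rw [h2, hIp]
    · have := hI (a := ⟨p, hp⟩) (b := m) (Fin.lt_def.mpr h); omega
  have vJ : ∀ m : Fin k, ((m : ℕ) < q → J m < b) ∧ ((m : ℕ) = q → J m = b) ∧
      (q < (m : ℕ) → b < J m) := by
    intro m
    refine ⟨fun h => ?_, fun h => ?_, fun h => ?_⟩
    · have := hJ (a := m) (b := ⟨q, hq⟩) (Fin.lt_def.mpr h); omega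
    · have h2 : m = ⟨q, hq⟩ := Fin.ext h; rw [h2, hJq]
    · have := hJ (a := ⟨q, hq⟩) (b := m) (Fin.lt_def.mpr h); omega
  have wI1 : ∀ (l : Fin (k - 1)) (m : Fin k), (m : ℕ) = (l : ℕ) → (l : ℕ) < p →
      I' l = I m ∧ I m < b := by
    intro l m hm hlp
    have hsk : skipF p l = m := Fin.ext (by rw [skipF_val, if_pos hlp]; omega)
    have hv : I m < b := (vI m).1 (by omega)
    rw [hI' l, hsk, hτ, if_pos hv]
    exact ⟨rfl, hv⟩
  have wI2 : ∀ (l : Fin (k - 1)) (m : Fin k), (m : ℕ) = (l : ℕ) + 1 → p ≤ (l : ℕ) →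
      I' l + 1 = I m ∧ b ≤ I' l := by
    intro l m hm hpl
    have hsk : skipF p l = m := Fin.ext (by rw [skipF_val, if_neg (by omega)]; omega)
    have hv : b < I m := (vI m).2.2 (by omega)
    rw [hI' l, hsk, hτ, if_neg (by omega)]
    omega
  have wJ1 : ∀ (l : Fin (k - 1)) (m : Fin k), (m : ℕ) = (l : ℕ) → (l : ℕ) < q →
      J' l = J m ∧ J m < b := by
    intro l m hm hlq
    have hsk : skipF q l = m := Fin.ext (by rw [skipF_val, if_pos hlq]; omega)
    have hv : J m < b := (vJ m).1 (by omega)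
    rw [hJ' l, hsk, hτ, if_pos hv]
    exact ⟨rfl, hv⟩
  have wJ2 : ∀ (l : Fin (k - 1)) (m : Fin k), (m : ℕ) = (l : ℕ) + 1 → q ≤ (l : ℕ) →
      J' l + 1 = J m ∧ b ≤ J' l := by
    intro l m hm hql
    have hsk : skipF q l = m := Fin.ext (by rw [skipF_val, if_neg (by omega)]; omega)
    have hv : b < J m := (vJ m).2.2 (by omega)
    rw [hJ' l, hsk, hτ, if_neg (by omega)]
    omega
  constructor
  · -- forward: NonCrossing I J → NonCrossing I' J'
    intro hNC a c hac hgap hcr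
    have hak := a.isLt
    have hck := c.isLt
    have hac' : (a : ℕ) < (c : ℕ) := Fin.lt_def.mp hac
    by_cases hcp : (c : ℕ) < p
    · -- both endpoints left of p ≤ q
      have hA : (a : ℕ) < k := by omega
      have hC : (c : ℕ) < k := by omega
      have e1 := wI1 a ⟨a, hA⟩ rfl (by omega)
      have e2 := wI1 c ⟨c, hC⟩ rfl (by omega)
      have e3 := wJ1 a ⟨a, hA⟩ rfl (by omega)
      have e4 := wJ1 c ⟨c, hC⟩ rfl (by omega)
      refine hNC ⟨a, hA⟩ ⟨c, hC⟩ (Fin.lt_def.mpr hac') ?_ ?_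
      · intro m h1 h2
        have h1' : (a : ℕ) < (m : ℕ) := Fin.lt_def.mp h1
        have h2' : (m : ℕ) < (c : ℕ) := Fin.lt_def.mp h2
        have hmk : (m : ℕ) < k - 1 := by omega
        have f1 := wI1 ⟨m, hmk⟩ m rfl (by show (m : ℕ) < p; omega)
        have f2 := wJ1 ⟨m, hmk⟩ m rfl (by show (m : ℕ) < q; omega)
        have f3 := hgap ⟨m, hmk⟩ (Fin.lt_def.mpr h1') (Fin.lt_def.mpr h2')
        omega
      · unfold Cross at hcr ⊢
        omega
    · by_cases hqa : q ≤ (a : ℕ)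
      · -- both endpoints right of q ≥ p
        have hA : (a : ℕ) + 1 < k := by omega
        have hC : (c : ℕ) + 1 < k := by omega
        have e1 := wI2 a ⟨(a : ℕ) + 1, hA⟩ rfl (by omega)
        have e2 := wI2 c ⟨(c : ℕ) + 1, hC⟩ rfl (by omega)
        have e3 := wJ2 a ⟨(a : ℕ) + 1, hA⟩ rfl (by omega)
        have e4 := wJ2 c ⟨(c : ℕ) + 1, hC⟩ rfl (by omega)
        refine hNC ⟨(a : ℕ) + 1, hA⟩ ⟨(c : ℕ) + 1, hC⟩ (Fin.lt_def.mpr (by show (a:ℕ)+1 < (c:ℕ)+1; omega)) ?_ ?_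
        · intro m h1 h2
          have h1' : (a : ℕ) + 1 < (m : ℕ) := Fin.lt_def.mp h1
          have h2' : (m : ℕ) < (c : ℕ) + 1 := Fin.lt_def.mp h2
          have hmk : (m : ℕ) - 1 < k - 1 := by have := m.isLt; omega
          have f1 := wI2 ⟨(m : ℕ) - 1, hmk⟩ m (by show (m:ℕ) = (m:ℕ) - 1 + 1; omega)
            (by show p ≤ (m:ℕ) - 1; omega)
          have f2 := wJ2 ⟨(m : ℕ) - 1, hmk⟩ m (by show (m:ℕ) = (m:ℕ) - 1 + 1; omega)
            (by show q ≤ (m:ℕ) - 1; omega)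
          have f3 := hgap ⟨(m : ℕ) - 1, hmk⟩ (Fin.lt_def.mpr (by show (a:ℕ) < (m:ℕ) - 1; omega))
            (Fin.lt_def.mpr (by show (m:ℕ) - 1 < (c:ℕ); omega))
          omega
        · unfold Cross at hcr ⊢
          omega
      · -- p ≤ c and a < q
        by_cases hpq2 : p = q
        · -- p = q : a < p ≤ c
          subst hpq2
          have hA : (a : ℕ) < k := by omega
          have hC : (c : ℕ) + 1 < k := by omega
          have e1 := wI1 a ⟨a, hA⟩ rfl (by omega)
          have e2 := wI2 c ⟨(c : ℕ) + 1, hC⟩ rfl (by omega)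
          have e3 := wJ1 a ⟨a, hA⟩ rfl (by omega)
          have e4 := wJ2 c ⟨(c : ℕ) + 1, hC⟩ rfl (by omega)
          refine hNC ⟨a, hA⟩ ⟨(c : ℕ) + 1, hC⟩ (Fin.lt_def.mpr (by show (a:ℕ) < (c:ℕ)+1; omega)) ?_ ?_
          · intro m h1 h2
            have h1' : (a : ℕ) < (m : ℕ) := Fin.lt_def.mp h1
            have h2' : (m : ℕ) < (c : ℕ) + 1 := Fin.lt_def.mp h2
            rcases Nat.lt_trichotomy (m : ℕ) p with hmp | hmp | hmp
            · have hmk : (m : ℕ) < k - 1 := by omega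
              have f1 := wI1 ⟨m, hmk⟩ m rfl (by show (m:ℕ) < p; omega)
              have f2 := wJ1 ⟨m, hmk⟩ m rfl (by show (m:ℕ) < p; omega)
              have f3 := hgap ⟨m, hmk⟩ (Fin.lt_def.mpr h1') (Fin.lt_def.mpr (by show (m:ℕ) < (c:ℕ); omega))
              omega
            · have g1 := (vI m).2.1 hmp
              have g2 := (vJ m).2.1 hmp
              omega
            · have hmk : (m : ℕ) - 1 < k - 1 := by omega
              have f1 := wI2 ⟨(m : ℕ) - 1, hmk⟩ m (by show (m:ℕ) = (m:ℕ) - 1 + 1; omega)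
                (by show p ≤ (m:ℕ) - 1; omega)
              have f2 := wJ2 ⟨(m : ℕ) - 1, hmk⟩ m (by show (m:ℕ) = (m:ℕ) - 1 + 1; omega)
                (by show p ≤ (m:ℕ) - 1; omega)
              have f3 := hgap ⟨(m : ℕ) - 1, hmk⟩ (Fin.lt_def.mpr (by show (a:ℕ) < (m:ℕ) - 1; omega))
                (Fin.lt_def.mpr (by show (m:ℕ) - 1 < (c:ℕ); omega))
              omega
          · unfold Cross at hcr ⊢
            omega
        · -- p < q
          have hplt : p < q := lt_of_le_of_ne hpq hpq2
          by_cases hap : (a : ℕ) < p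
          · by_cases hcp2 : (c : ℕ) = p
            · -- pair (a, p) in the original
              have hA : (a : ℕ) < k := by omega
              have hP1 : p + 1 < k := by omega
              have e1 := wI1 a ⟨a, hA⟩ rfl (by omega)
              have e2 := wI2 c ⟨p + 1, hP1⟩ (by show p + 1 = (c:ℕ) + 1; omega) (by omega)
              have e3 := wJ1 a ⟨a, hA⟩ rfl (by omega)
              have e4 := wJ1 c ⟨p, hp⟩ (by show p = (c:ℕ); omega) (by omega)
              refine hNC ⟨a, hA⟩ ⟨p, hp⟩ (Fin.lt_def.mpr (by show (a:ℕ) < p; omega)) ?_ ?_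
              · intro m h1 h2
                have h1' : (a : ℕ) < (m : ℕ) := Fin.lt_def.mp h1
                have h2' : (m : ℕ) < p := Fin.lt_def.mp h2
                have hmk : (m : ℕ) < k - 1 := by omega
                have f1 := wI1 ⟨m, hmk⟩ m rfl (by show (m:ℕ) < p; omega)
                have f2 := wJ1 ⟨m, hmk⟩ m rfl (by show (m:ℕ) < q; omega)
                have f3 := hgap ⟨m, hmk⟩ (Fin.lt_def.mpr h1') (Fin.lt_def.mpr (by show (m:ℕ) < (c:ℕ); omega))
                omega
              · unfold Cross at hcr ⊢
                omega
            · -- a < p < c : gap at p gives a contradiction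
              have hpk1 : p < k - 1 := by omega
              have hP1 : p + 1 < k := by omega
              have f3 := hgap ⟨p, hpk1⟩ (Fin.lt_def.mpr (by show (a:ℕ) < p; omega))
                (Fin.lt_def.mpr (by show p < (c:ℕ); omega))
              have f1 := wI2 ⟨p, hpk1⟩ ⟨p + 1, hP1⟩ rfl (by show p ≤ p; omega)
              have f2 := wJ1 ⟨p, hpk1⟩ ⟨p, hp⟩ rfl (by show p < q; omega)
              omega
          · -- p ≤ a < q
            by_cases haq : (a : ℕ) = q - 1
            · -- pair (q, c+1) in the original
              have hC : (c : ℕ) + 1 < k := by omega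
              have hQ1 : q - 1 < k := by omega
              have e1 := wI2 a ⟨q, hq⟩ (by show q = (a:ℕ) + 1; omega) (by omega)
              have e3 := wJ1 a ⟨q - 1, hQ1⟩ (by show q - 1 = (a:ℕ); omega) (by omega)
              have e2 := wI2 c ⟨(c : ℕ) + 1, hC⟩ rfl (by omega)
              have e4 := wJ2 c ⟨(c : ℕ) + 1, hC⟩ rfl (by omega)
              refine hNC ⟨q, hq⟩ ⟨(c : ℕ) + 1, hC⟩ (Fin.lt_def.mpr (by show q < (c:ℕ)+1; omega)) ?_ ?_
              · intro m h1 h2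
                have h1' : q < (m : ℕ) := Fin.lt_def.mp h1
                have h2' : (m : ℕ) < (c : ℕ) + 1 := Fin.lt_def.mp h2
                have hmk : (m : ℕ) - 1 < k - 1 := by have := m.isLt; omega
                have f1 := wI2 ⟨(m : ℕ) - 1, hmk⟩ m (by show (m:ℕ) = (m:ℕ) - 1 + 1; omega)
                  (by show p ≤ (m:ℕ) - 1; omega)
                have f2 := wJ2 ⟨(m : ℕ) - 1, hmk⟩ m (by show (m:ℕ) = (m:ℕ) - 1 + 1; omega)
                  (by show q ≤ (m:ℕ) - 1; omega)
                have f3 := hgap ⟨(m : ℕ) - 1, hmk⟩ (Fin.lt_def.mpr (by show (a:ℕ) < (m:ℕ) - 1; omega))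
                  (Fin.lt_def.mpr (by show (m:ℕ) - 1 < (c:ℕ); omega))
                omega
              · unfold Cross at hcr ⊢
                omega
            · -- p ≤ a ≤ q - 2
              by_cases hca : (c : ℕ) = (a : ℕ) + 1
              · -- no crossing possible directly
                have hA1 : (a : ℕ) + 1 < k := by omega
                have e1 := wI2 a ⟨(a : ℕ) + 1, hA1⟩ rfl (by omega)
                have e3 := wJ1 a ⟨(a : ℕ), by omega⟩ rfl (by omega)
                have e4 := wJ1 c ⟨(a : ℕ) + 1, hA1⟩ (by show (a:ℕ) + 1 = (c:ℕ); omega) (by omega)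
                unfold Cross at hcr
                omega
              · -- gap at a+1 gives a contradiction
                have hak1 : (a : ℕ) + 1 < k - 1 := by omega
                have hA2 : (a : ℕ) + 2 < k := by omega
                have f3 := hgap ⟨(a : ℕ) + 1, hak1⟩ (Fin.lt_def.mpr (by show (a:ℕ) < (a:ℕ)+1; omega))
                  (Fin.lt_def.mpr (by show (a:ℕ)+1 < (c:ℕ); omega))
                have f1 := wI2 ⟨(a : ℕ) + 1, hak1⟩ ⟨(a : ℕ) + 2, hA2⟩
                  (by show (a:ℕ) + 2 = (a:ℕ) + 1 + 1; omega) (by show p ≤ (a:ℕ) + 1; omega)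
                have f2 := wJ1 ⟨(a : ℕ) + 1, hak1⟩ ⟨(a : ℕ) + 1, by omega⟩ rfl
                  (by show (a:ℕ) + 1 < q; omega)
                omega
  · -- backward: NonCrossing I' J' → NonCrossing I J
    intro hNC a c hac hgap hcr
    have hak := a.isLt
    have hck := c.isLt
    have hac' : (a : ℕ) < (c : ℕ) := Fin.lt_def.mp hac
    by_cases hcp : (c : ℕ) < p
    · have hA : (a : ℕ) < k - 1 := by omega
      have hC : (c : ℕ) < k - 1 := by omega
      have e1 := wI1 ⟨a, hA⟩ a rfl (by show (a:ℕ) < p; omega)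
      have e2 := wI1 ⟨c, hC⟩ c rfl (by show (c:ℕ) < p; omega)
      have e3 := wJ1 ⟨a, hA⟩ a rfl (by show (a:ℕ) < q; omega)
      have e4 := wJ1 ⟨c, hC⟩ c rfl (by show (c:ℕ) < q; omega)
      refine hNC ⟨a, hA⟩ ⟨c, hC⟩ (Fin.lt_def.mpr hac') ?_ ?_
      · intro l h1 h2
        have h1' : (a : ℕ) < (l : ℕ) := Fin.lt_def.mp h1
        have h2' : (l : ℕ) < (c : ℕ) := Fin.lt_def.mp h2
        have hM : (l : ℕ) < k := by omega
        have f1 := wI1 l ⟨l, hM⟩ rfl (by omega)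
        have f2 := wJ1 l ⟨l, hM⟩ rfl (by omega)
        have f3 := hgap ⟨l, hM⟩ (Fin.lt_def.mpr h1') (Fin.lt_def.mpr h2')
        omega
      · unfold Cross at hcr ⊢
        omega
    · by_cases hqa : q < (a : ℕ)
      · have hA : (a : ℕ) - 1 < k - 1 := by omega
        have hC : (c : ℕ) - 1 < k - 1 := by omega
        have e1 := wI2 ⟨(a : ℕ) - 1, hA⟩ a (by show (a:ℕ) = (a:ℕ) - 1 + 1; omega)
          (by show p ≤ (a:ℕ) - 1; omega)
        have e2 := wI2 ⟨(c : ℕ) - 1, hC⟩ c (by show (c:ℕ) = (c:ℕ) - 1 + 1; omega)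
          (by show p ≤ (c:ℕ) - 1; omega)
        have e3 := wJ2 ⟨(a : ℕ) - 1, hA⟩ a (by show (a:ℕ) = (a:ℕ) - 1 + 1; omega)
          (by show q ≤ (a:ℕ) - 1; omega)
        have e4 := wJ2 ⟨(c : ℕ) - 1, hC⟩ c (by show (c:ℕ) = (c:ℕ) - 1 + 1; omega)
          (by show q ≤ (c:ℕ) - 1; omega)
        refine hNC ⟨(a : ℕ) - 1, hA⟩ ⟨(c : ℕ) - 1, hC⟩
          (Fin.lt_def.mpr (by show (a:ℕ) - 1 < (c:ℕ) - 1; omega)) ?_ ?_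
        · intro l h1 h2
          have h1' : (a : ℕ) - 1 < (l : ℕ) := Fin.lt_def.mp h1
          have h2' : (l : ℕ) < (c : ℕ) - 1 := Fin.lt_def.mp h2
          have hM : (l : ℕ) + 1 < k := by omega
          have f1 := wI2 l ⟨(l : ℕ) + 1, hM⟩ rfl (by omega)
          have f2 := wJ2 l ⟨(l : ℕ) + 1, hM⟩ rfl (by omega)
          have f3 := hgap ⟨(l : ℕ) + 1, hM⟩ (Fin.lt_def.mpr (by show (a:ℕ) < (l:ℕ) + 1; omega))
            (Fin.lt_def.mpr (by show (l:ℕ) + 1 < (c:ℕ); omega))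
          omega
        · unfold Cross at hcr ⊢
          omega
      · -- p ≤ c, a ≤ q
        by_cases hpq2 : p = q
        · subst hpq2
          rcases Nat.lt_trichotomy (a : ℕ) p with h | h | h
          · rcases eq_or_lt_of_le (show p ≤ (c : ℕ) from by omega) with h2 | h2
            · -- c = p : I c = b = J c, crossing impossible
              have g1 := (vI c).2.1 (by omega)
              have g2 := (vJ c).2.1 (by omega)
              unfold Cross at hcr
              omega
            · -- a < p < c : primed pair (a, c-1)
              have hA : (a : ℕ) < k - 1 := by omega
              have hC : (c : ℕ) - 1 < k - 1 := by omega
              have e1 := wI1 ⟨a, hA⟩ a rfl (by show (a:ℕ) < p; omega)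
              have e2 := wI2 ⟨(c : ℕ) - 1, hC⟩ c (by show (c:ℕ) = (c:ℕ) - 1 + 1; omega)
                (by show p ≤ (c:ℕ) - 1; omega)
              have e3 := wJ1 ⟨a, hA⟩ a rfl (by show (a:ℕ) < p; omega)
              have e4 := wJ2 ⟨(c : ℕ) - 1, hC⟩ c (by show (c:ℕ) = (c:ℕ) - 1 + 1; omega)
                (by show p ≤ (c:ℕ) - 1; omega)
              refine hNC ⟨a, hA⟩ ⟨(c : ℕ) - 1, hC⟩
                (Fin.lt_def.mpr (by show (a:ℕ) < (c:ℕ) - 1; omega)) ?_ ?_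
              · intro l h1 h2
                have h1' : (a : ℕ) < (l : ℕ) := Fin.lt_def.mp h1
                have h2' : (l : ℕ) < (c : ℕ) - 1 := Fin.lt_def.mp h2
                by_cases hlp : (l : ℕ) < p
                · have hM : (l : ℕ) < k := by omega
                  have f1 := wI1 l ⟨l, hM⟩ rfl (by omega)
                  have f2 := wJ1 l ⟨l, hM⟩ rfl (by omega)
                  have f3 := hgap ⟨l, hM⟩ (Fin.lt_def.mpr h1')
                    (Fin.lt_def.mpr (by show (l:ℕ) < (c:ℕ); omega))
                  omega
                · have hM : (l : ℕ) + 1 < k := by omega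
                  have f1 := wI2 l ⟨(l : ℕ) + 1, hM⟩ rfl (by omega)
                  have f2 := wJ2 l ⟨(l : ℕ) + 1, hM⟩ rfl (by omega)
                  have f3 := hgap ⟨(l : ℕ) + 1, hM⟩
                    (Fin.lt_def.mpr (by show (a:ℕ) < (l:ℕ) + 1; omega))
                    (Fin.lt_def.mpr (by show (l:ℕ) + 1 < (c:ℕ); omega))
                  omega
              · unfold Cross at hcr ⊢
                omega
          · -- a = p = q : I a = b = J a, crossing impossible
            have g1 := (vI a).2.1 h
            have g2 := (vJ a).2.1 h
            unfold Cross at hcr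
            omega
          · omega
        · -- p < q
          have hplt : p < q := lt_of_le_of_ne hpq hpq2
          rcases eq_or_lt_of_le (show (a : ℕ) ≤ q from by omega) with haq | haq
          · -- a = q (haq : (a:ℕ) = q ... careful direction), c > q : primed pair (q-1, c-1)
            have hA : q - 1 < k - 1 := by omega
            have hC : (c : ℕ) - 1 < k - 1 := by omega
            have hQ1 : q - 1 < k := by omega
            have gJa := (vJ a).2.1 haq
            have e1 := wI2 ⟨q - 1, hA⟩ a (by show (a:ℕ) = q - 1 + 1; omega)
              (by show p ≤ q - 1; omega)
            have e3 := wJ1 ⟨q - 1, hA⟩ ⟨q - 1, hQ1⟩ rfl (by show q - 1 < q; omega)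
            have e2 := wI2 ⟨(c : ℕ) - 1, hC⟩ c (by show (c:ℕ) = (c:ℕ) - 1 + 1; omega)
              (by show p ≤ (c:ℕ) - 1; omega)
            have e4 := wJ2 ⟨(c : ℕ) - 1, hC⟩ c (by show (c:ℕ) = (c:ℕ) - 1 + 1; omega)
              (by show q ≤ (c:ℕ) - 1; omega)
            refine hNC ⟨q - 1, hA⟩ ⟨(c : ℕ) - 1, hC⟩
              (Fin.lt_def.mpr (by show q - 1 < (c:ℕ) - 1; omega)) ?_ ?_
            · intro l h1 h2
              have h1' : q - 1 < (l : ℕ) := Fin.lt_def.mp h1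
              have h2' : (l : ℕ) < (c : ℕ) - 1 := Fin.lt_def.mp h2
              have hM : (l : ℕ) + 1 < k := by omega
              have f1 := wI2 l ⟨(l : ℕ) + 1, hM⟩ rfl (by omega)
              have f2 := wJ2 l ⟨(l : ℕ) + 1, hM⟩ rfl (by omega)
              have f3 := hgap ⟨(l : ℕ) + 1, hM⟩
                (Fin.lt_def.mpr (by show (a:ℕ) < (l:ℕ) + 1; omega))
                (Fin.lt_def.mpr (by show (l:ℕ) + 1 < (c:ℕ); omega))
              omega
            · unfold Cross at hcr ⊢
              omega
          · -- a < q
            rcases eq_or_lt_of_le (show p ≤ (c : ℕ) from by omega) with hcp2 | hcp2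
            · -- c = p (hcp2 : p = c), a < p : primed pair (a, p)
              have hA : (a : ℕ) < k - 1 := by omega
              have hpk1 : p < k - 1 := by omega
              have hP1 : p + 1 < k := by omega
              have gc := (vI c).2.1 (by omega)
              have e1 := wI1 ⟨a, hA⟩ a rfl (by show (a:ℕ) < p; omega)
              have e3 := wJ1 ⟨a, hA⟩ a rfl (by show (a:ℕ) < q; omega)
              have e2 := wI2 ⟨p, hpk1⟩ ⟨p + 1, hP1⟩ rfl (by show p ≤ p; omega)
              have e4 := wJ1 ⟨p, hpk1⟩ c (by show (c:ℕ) = p; omega) (by show p < q; omega)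
              refine hNC ⟨a, hA⟩ ⟨p, hpk1⟩
                (Fin.lt_def.mpr (by show (a:ℕ) < p; omega)) ?_ ?_
              · intro l h1 h2
                have h1' : (a : ℕ) < (l : ℕ) := Fin.lt_def.mp h1
                have h2' : (l : ℕ) < p := Fin.lt_def.mp h2
                have hM : (l : ℕ) < k := by omega
                have f1 := wI1 l ⟨l, hM⟩ rfl (by omega)
                have f2 := wJ1 l ⟨l, hM⟩ rfl (by omega)
                have f3 := hgap ⟨l, hM⟩ (Fin.lt_def.mpr h1')
                  (Fin.lt_def.mpr (by show (l:ℕ) < (c:ℕ); omega))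
                omega
              · unfold Cross at hcr ⊢
                omega
            · -- p < c
              by_cases hpa : p ≤ (a : ℕ)
              · by_cases hca : (c : ℕ) = (a : ℕ) + 1
                · -- direct impossibility
                  have g1 : b ≤ I a := by
                    rcases eq_or_lt_of_le hpa with h | h
                    · have := (vI a).2.1 (by omega); omega
                    · have := (vI a).2.2 h; omega
                  have g2 : J a < b := (vJ a).1 (by omega)
                  have g3 : J c ≤ b := by
                    rcases eq_or_lt_of_le (show (c : ℕ) ≤ q from by omega) with h | h
                    · have := (vJ c).2.1 (by omega); omega
                    · have := (vJ c).1 h; omega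
                  unfold Cross at hcr
                  omega
                · -- gap at a+1 gives a contradiction
                  have hM : (a : ℕ) + 1 < k := by omega
                  have f3 := hgap ⟨(a : ℕ) + 1, hM⟩
                    (Fin.lt_def.mpr (by show (a:ℕ) < (a:ℕ) + 1; omega))
                    (Fin.lt_def.mpr (by show (a:ℕ) + 1 < (c:ℕ); omega))
                  have g1 := (vI ⟨(a : ℕ) + 1, hM⟩).2.2 (by show p < (a:ℕ) + 1; omega)
                  have g2 : J ⟨(a : ℕ) + 1, hM⟩ ≤ b := by
                    rcases eq_or_lt_of_le (show (a : ℕ) + 1 ≤ q from by omega) with h | h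
                    · have := (vJ ⟨(a : ℕ) + 1, hM⟩).2.1 (by show (a:ℕ) + 1 = q; omega); omega
                    · have := (vJ ⟨(a : ℕ) + 1, hM⟩).1 h; omega
                  omega
              · -- a < p < c : gap at p gives a contradiction
                have f3 := hgap ⟨p, hp⟩ (Fin.lt_def.mpr (by show (a:ℕ) < p; omega))
                  (Fin.lt_def.mpr (by show p < (c:ℕ); omega))
                have g2 := (vJ ⟨p, hp⟩).1 (by show p < q; omega)
                omega

/-- restricting the noncrossing relation.  Here `τ x = x` for `x < b`
and `τ x = x - 1` for `x > b` is the unique order-preserving bijection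
`[n] \ {b} → [n−1]`.  (1) For `I, J` both containing `b`, deletion of `b` (followed by
`τ`) preserves noncrossingness, landing in `V_{k−1,n−1}`; (2) for `I, J` both avoiding
`b`, applying `τ` preserves noncrossingness, landing in `V_{k,n−1}`. -/
theorem stmt4 {n k : ℕ} (hk : 0 < k) (hkn : k < n)
    (b : ℕ) (hb1 : 1 ≤ b) (hbn : b ≤ n)
    (τ : ℕ → ℕ) (hτ : ∀ x, τ x = if x < b then x else x - 1) :
    (∀ I J : Fin k → ℕ, IsVkn n I → IsVkn n J → MemT I b → MemT J b →
      ∀ I' J' : Fin (k - 1) → ℕ, IsVkn (n - 1) I' → IsVkn (n - 1) J' →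
        (∀ y, MemT I' y ↔ ∃ x, MemT I x ∧ x ≠ b ∧ τ x = y) →
        (∀ y, MemT J' y ↔ ∃ x, MemT J x ∧ x ≠ b ∧ τ x = y) →
        (NonCrossing I J ↔ NonCrossing I' J'))
    ∧
    (∀ I J : Fin k → ℕ, IsVkn n I → IsVkn n J → ¬ MemT I b → ¬ MemT J b →
      ∀ I' J' : Fin k → ℕ, IsVkn (n - 1) I' → IsVkn (n - 1) J' →
        (∀ y, MemT I' y ↔ ∃ x, MemT I x ∧ τ x = y) →
        (∀ y, MemT J' y ↔ ∃ x, MemT J x ∧ τ x = y) →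
        (NonCrossing I J ↔ NonCrossing I' J')) := by
  have ncomm : ∀ {m : ℕ} (f g : Fin m → ℕ), NonCrossing f g ↔ NonCrossing g f :=
    fun f g => ⟨nc_symm, nc_symm⟩
  constructor
  · intro I J hIV hJV hbI hbJ I' J' hI'V hJ'V hsI hsJ
    simp only [MemT] at hbI hbJ
    obtain ⟨pi, hpi⟩ := hbI
    obtain ⟨qi, hqi⟩ := hbJ
    have hIe := ident τ hτ hIV.1 hI'V.1 pi hpi hsI
    have hJe := ident τ hτ hJV.1 hJ'V.1 qi hqi hsJ
    rcases le_or_gt (pi : ℕ) (qi : ℕ) with h | h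
    · exact core τ hτ pi.isLt qi.isLt h hIV.1 hJV.1 hpi hqi hIe hJe
    · rw [ncomm I J, ncomm I' J']
      exact core τ hτ qi.isLt pi.isLt (le_of_lt h) hJV.1 hIV.1 hqi hpi hJe hIe
  · intro I J hIV hJV hbI hbJ I' J' hI'V hJ'V hsI hsJ
    exact core2 τ hτ (fun m h => hbI ⟨m, h⟩) (fun m h => hbJ ⟨m, h⟩)
      (ident2 τ hτ hIV.1 hI'V.1 hbI hsI) (ident2 τ hτ hJV.1 hJ'V.1 hbJ hsJ)
end

section
/- Let 0 < k < n. For c ∈ {0,1,…,n−1}, let the cyclic interval C_c ∈ V_{k,n} be the increasing enumeration of the k-element subset {((c+j−1) mod n) + 1 : j = 1,…,k} of [n]. Then for every c ∈ {0,…,n−1} and every J ∈ V_{k,n}, the tuples C_c and J are noncrossing. -/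
lemma jadd {k : ℕ} {J : Fin k → ℕ} (hJ : StrictMono J) :
    ∀ (d : ℕ) (a : Fin k) (h : a.val + d < k), J a + d ≤ J ⟨a.val + d, h⟩ := by
  intro d
  induction d with
  | zero => intro a h; simp
  | succ d ih =>
      intro a h
      have h' : a.val + d < k := by omega
      have h1 := ih a h'
      have hlt : (⟨a.val + d, h'⟩ : Fin k) < ⟨a.val + d + 1, h⟩ := by
        simp [Fin.lt_def]
      have h2 := hJ hlt
      show J a + d + 1 ≤ J ⟨a.val + d + 1, h⟩
      omega

lemma jbetween {k : ℕ} {J : Fin k → ℕ} (hJ : StrictMono J) (a b : Fin k)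
    (hab : a ≤ b) : J a + (b.val - a.val) ≤ J b := by
  have hab' : a.val ≤ b.val := hab
  have h : a.val + (b.val - a.val) < k := by have := b.isLt; omega
  have h1 := jadd hJ (b.val - a.val) a h
  have hb : (⟨a.val + (b.val - a.val), h⟩ : Fin k) = b := by
    apply Fin.ext; simp; omega
  rwa [hb] at h1

lemma card_le_of_sub {k : ℕ} {C : Fin k → ℕ} (T : Finset ℕ) (b : Fin k)
    (h : ∀ y ∈ T, ∃ l : Fin k, l ≤ b ∧ C l = y) : T.card ≤ b.val + 1 := by
  have hsub : T ⊆ (Finset.Iic b).image C := by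
    intro y hy
    obtain ⟨l, hl, hly⟩ := h y hy
    exact Finset.mem_image.mpr ⟨l, Finset.mem_Iic.mpr hl, hly⟩
  calc T.card ≤ ((Finset.Iic b).image C).card := Finset.card_le_card hsub
    _ ≤ (Finset.Iic b).card := Finset.card_image_le
    _ = b.val + 1 := by rw [Fin.card_Iic]

/-- every cyclic interval `C_c` (the increasing enumeration of
`{((c+j−1) mod n) + 1 : j = 1,…,k}`, i.e. of `{((c+j) mod n) + 1 : j = 0,…,k−1}`)
is noncrossing with every `J ∈ V_{k,n}`. -/
theorem stmt5 {n k : ℕ} (hk : 0 < k) (hkn : k < n)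
    (c : ℕ) (hc : c < n)
    (C : Fin k → ℕ) (hC : IsVkn n C)
    (hCrange : ∀ x, MemT C x ↔ ∃ j : Fin k, (c + j.val) % n + 1 = x)
    (J : Fin k → ℕ) (hJ : IsVkn n J) :
    NonCrossing C J := by
  obtain ⟨hCmono, hCbd⟩ := hC
  obtain ⟨hJmono, hJbd⟩ := hJ
  have factB : ∀ a : Fin k, (c + 1 ≤ C a ∧ C a ≤ c + k) ∨ C a + n ≤ c + k := by
    intro a
    obtain ⟨j, hj⟩ := (hCrange (C a)).mp ⟨a, rfl⟩
    have hjk := j.isLt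
    rcases lt_or_ge (c + j.val) n with h | h
    · left; rw [Nat.mod_eq_of_lt h] at hj; omega
    · right
      have hmod : (c + j.val) % n = c + j.val - n := by
        rw [Nat.mod_eq_sub_mod h]
        exact Nat.mod_eq_of_lt (by omega)
      rw [hmod] at hj
      omega
  have memA : ∀ x, c + 1 ≤ x → x ≤ c + k → x ≤ n → MemT C x := by
    intro x h1 h2 h3
    apply (hCrange x).mpr
    refine ⟨⟨x - c - 1, by omega⟩, ?_⟩
    simp only
    rw [Nat.mod_eq_of_lt (by omega)]
    omega
  have memB : ∀ x, 1 ≤ x → x + n ≤ c + k → MemT C x := by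
    intro x h1 h2
    apply (hCrange x).mpr
    refine ⟨⟨x - 1 + n - c, by omega⟩, ?_⟩
    simp only
    have hc' : c + (x - 1 + n - c) = (x - 1) + n := by omega
    rw [hc', Nat.add_mod_right, Nat.mod_eq_of_lt (by omega)]
    omega
  intro a b hab hmid hcross
  have notmem : ∀ x, C a < x → x < C b → (x = J a ∨ x = J b) → ¬ MemT C x := by
    rintro x hxa hxb hx ⟨l, hl⟩
    have hal : a < l := hCmono.lt_iff_lt.mp (by omega)
    have hlb : l < b := hCmono.lt_iff_lt.mp (by omega)
    have heq := hmid l hal hlb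
    rcases hx with rfl | rfl
    · have := hJmono hal; omega
    · have := hJmono hlb; omega
  have hlastlt : k - 1 < k := by omega
  have h0lt : (0 : ℕ) < k := hk
  rcases hcross with ⟨h1, h2, h3⟩ | ⟨h1, h2, h3⟩
  · -- C a < J a < C b < J b
    rcases factB a with ⟨ha1, ha2⟩ | ha
    · -- C a in top block: J a ∈ S
      have hb' : c + 1 ≤ C b ∧ C b ≤ c + k := by
        rcases factB b with h | h
        · exact h
        · exfalso; omega
      exact notmem (J a) h1 h2 (Or.inl rfl) (memA (J a) (by omega) (by omega) (hJbd a).2)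
    · -- wrap case and C a in bottom block
      have hCa1 := (hCbd a).1
      rcases factB b with ⟨hb1, hb2⟩ | hb
      · -- C b in top block: counting
        have hbound : b.val + 1 ≤ (c + k - n) + (C b - c) := by
          have hdisj : Disjoint (Finset.Icc 1 (c + k - n)) (Finset.Icc (c + 1) (C b)) := by
            apply Finset.disjoint_left.mpr
            intro y hy1 hy2
            rw [Finset.mem_Icc] at hy1 hy2
            omega
          have hsub : (Finset.Iic b).image C ⊆
              Finset.Icc 1 (c + k - n) ∪ Finset.Icc (c + 1) (C b) := by
            intro y hy
            obtain ⟨l, hl, rfl⟩ := Finset.mem_image.mp hy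
            rw [Finset.mem_Iic] at hl
            rw [Finset.mem_union, Finset.mem_Icc, Finset.mem_Icc]
            have hlb : C l ≤ C b := hCmono.le_iff_le.mpr hl
            have hl1 := (hCbd l).1
            rcases factB l with h | h
            · right; omega
            · left; omega
          have hcard := Finset.card_le_card hsub
          rw [Finset.card_image_of_injective _ hCmono.injective, Fin.card_Iic,
            Finset.card_union_of_disjoint hdisj, Nat.card_Icc, Nat.card_Icc] at hcard
          omega
        have hble : b ≤ (⟨k - 1, hlastlt⟩ : Fin k) := by
          rw [Fin.le_def]; exact Nat.le_sub_one_of_lt b.isLt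
        have hjb := jbetween hJmono b ⟨k - 1, hlastlt⟩ hble
        have hjlast := (hJbd ⟨k - 1, hlastlt⟩).2
        have hbval := b.isLt
        simp only at hjb
        omega
      · -- C b in bottom block too: J a ∈ S (bottom)
        exact notmem (J a) h1 h2 (Or.inl rfl) (memB (J a) (hJbd a).1 (by omega))
  · -- J a < C a < J b < C b
    rcases factB a with ⟨ha1, ha2⟩ | ha
    · -- C a in top block: J b ∈ S
      have hb' : c + 1 ≤ C b ∧ C b ≤ c + k := by
        rcases factB b with h | h
        · exact h
        · exfalso; omega
      exact notmem (J b) h2 h3 (Or.inr rfl) (memA (J b) (by omega) (by omega) (hJbd b).2)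
    · -- C a in bottom block: pigeonhole gives C a ≤ a+1, but J a ≥ a+1
      have hCa1 := (hCbd a).1
      have hbound : C a ≤ a.val + 1 := by
        have hcard := card_le_of_sub (C := C) (Finset.Icc 1 (C a)) a ?_
        · rw [Nat.card_Icc] at hcard; omega
        · intro y hy
          rw [Finset.mem_Icc] at hy
          obtain ⟨hy1, hy2⟩ := hy
          obtain ⟨l, hl⟩ := memB y hy1 (by omega)
          refine ⟨l, hCmono.le_iff_le.mp (by omega), hl⟩
      have hz : (⟨0, h0lt⟩ : Fin k) ≤ a := by rw [Fin.le_def]; exact Nat.zero_le _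
      have hja := jbetween hJmono ⟨0, h0lt⟩ a hz
      have hj0 := (hJbd ⟨0, h0lt⟩).1
      simp only at hja
      omega
end

section
/- Let 0 < k < n and let T be a tableau of shape k×(n−k). Then there exists a unique multiset M of elements of V*_{k,n} such that every two elements of M are nonnesting and the sum of the characteristic vectors of the elements of M (with multiplicity) equals T, i.e., Σ_{I ∈ M} χ_I = T. -/
/-- The characteristic vector `χ_I ∈ {0,1}^{[k]×[m]}` (`m = n−k`), given in 0-based
coordinates: `χ_I(a,b) = 1` iff `i_{a+1} ≤ (a+1)+(b+1)−1 = a+b+1`. -/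
def chi (m : ℕ) {k : ℕ} (I : Fin k → ℕ) : Fin k × Fin m → ℕ :=
  fun p => if I p.1 ≤ p.1.val + p.2.val + 1 then 1 else 0

/-- The top element `(n−k+1, n−k+2, …, n)` of `V_{k,n}`. -/
def TopVec (n k : ℕ) : Fin k → ℕ := fun a => n - k + 1 + a.val

/-- A tableau of shape `k × m`: weakly increasing along rows from left to right and
along columns from bottom to top (rows labeled from top to bottom). -/
def IsTableau {k m : ℕ} (T : Fin k × Fin m → ℕ) : Prop :=
  (∀ a : Fin k, ∀ b b' : Fin m, b ≤ b' → T (a, b) ≤ T (a, b')) ∧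
  (∀ a a' : Fin k, ∀ b : Fin m, a ≤ a' → T (a', b) ≤ T (a, b))

open Finset

section Tuples

variable {k : ℕ}

lemma StrictMono.apply_add_sub_le {I : Fin k → ℕ} (hI : StrictMono I) {a b : Fin k}
    (hab : a ≤ b) : I a + (b - a : ℕ) ≤ I b := by
  obtain ⟨d, hd⟩ : ∃ d, (b : ℕ) = a + d := ⟨b - a, by omega⟩
  induction d generalizing b with
  | zero =>
    obtain rfl : b = a := Fin.ext (by omega)
    simp
  | succ d ih =>
    have hb' : (a : ℕ) + d < k := by omega
    have hprev := ih (b := ⟨a + d, hb'⟩) (Fin.mk_le_mk.2 (by omega)) rfl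
    have hlt : I ⟨a + d, hb'⟩ < I b := hI (Fin.mk_lt_of_lt_val (by omega))
    simp only at hprev
    omega

lemma IsVkn.succ_le {n : ℕ} {I : Fin k → ℕ} (hI : IsVkn n I) (a : Fin k) :
    (a : ℕ) + 1 ≤ I a := by
  have h0 : (⟨0, a.pos⟩ : Fin k) ≤ a := Fin.mk_le_mk.2 (Nat.zero_le _)
  have := hI.1.apply_add_sub_le h0
  have := (hI.2 ⟨0, a.pos⟩).1
  simp only at *
  omega

lemma IsVkn.le_sub_add {n : ℕ} (hkn : k ≤ n) {I : Fin k → ℕ} (hI : IsVkn n I) (a : Fin k) :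
    I a ≤ n - k + a + 1 := by
  have := a.pos
  have hlast : a ≤ (⟨k - 1, by omega⟩ : Fin k) := Fin.mk_le_mk.2 (by omega)
  have := hI.1.apply_add_sub_le hlast
  have := (hI.2 ⟨k - 1, by omega⟩).2
  simp only at *
  omega

lemma nonNesting_iff_le_or_le {I J : Fin k → ℕ} (hI : StrictMono I) (hJ : StrictMono J) :
    NonNesting I J ↔ I ≤ J ∨ J ≤ I := by
  constructor
  · intro h
    by_contra! hc
    simp only [Pi.le_def, not_forall] at hc
    obtain ⟨⟨b, hb⟩, ⟨a, ha⟩⟩ := hc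
    simp only [not_le] at ha hb
    rcases lt_trichotomy a b with hab | rfl | hab
    · exact h a b hab (Or.inl ⟨ha, hJ hab, hb⟩)
    · omega
    · exact h b a hab (Or.inr ⟨hb, hI hab, ha⟩)
  · rintro (hle | hle) a b _ (⟨h₁, -, h₂⟩ | ⟨h₁, -, h₂⟩)
    · exact (hle b).not_gt h₂
    · exact (hle a).not_gt h₁
    · exact (hle a).not_gt h₁
    · exact (hle b).not_gt h₂

end Tuples

section CharacteristicVector

variable {k m : ℕ}

lemma chi_le_one (I : Fin k → ℕ) (p : Fin k × Fin m) : chi m I p ≤ 1 := by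
  unfold chi
  split_ifs <;> omega

lemma chi_le_chi_of_le {I J : Fin k → ℕ} (h : I ≤ J) (p : Fin k × Fin m) :
    chi m J p ≤ chi m I p := by
  unfold chi
  have : I p.1 ≤ J p.1 := h p.1
  split_ifs <;> omega

lemma chi_injOn {n : ℕ} (hkn : k ≤ n) : Set.InjOn (chi (n - k)) {I : Fin k → ℕ | IsVkn n I} := by
  suffices key : ∀ ⦃I J : Fin k → ℕ⦄, IsVkn n I → IsVkn n J →
      chi (n - k) I = chi (n - k) J → ∀ a, J a ≤ I a from
    fun I hI J hJ h => le_antisymm (fun a => key hJ hI h.symm a) (fun a => key hI hJ h a)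
  intro I J hI hJ h a
  by_contra! hlt
  have h₁ := hI.succ_le a
  have h₂ := hJ.le_sub_add hkn a
  -- the column `b` of row `a` where `χ_I` has already switched to `1` but `χ_J` has not
  have := congrFun h (a, ⟨I a - a - 1, by omega⟩)
  simp only [chi] at this
  split_ifs at this <;> omega

lemma exists_chi_eq_one {n : ℕ} (hkn : k < n) {I : Fin k → ℕ} (hI : IsVkn n I)
    (hne : I ≠ TopVec n k) : ∃ p, chi (n - k) I p = 1 := by
  obtain ⟨a, ha⟩ := Function.ne_iff.1 hne
  have := hI.le_sub_add hkn.le a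
  refine ⟨(a, ⟨n - k - 1, by omega⟩), ?_⟩
  simp only [TopVec] at ha
  simp only [chi]
  split_ifs <;> omega

end CharacteristicVector

section LevelTuple

variable {k m : ℕ}

def rowCountLt (T : Fin k × Fin m → ℕ) (s : ℕ) (a : Fin k) : ℕ :=
  #{b | T (a, b) < s}

def levelTuple (T : Fin k × Fin m → ℕ) (s : ℕ) : Fin k → ℕ :=
  fun a => a + 1 + rowCountLt T s a

variable {T : Fin k × Fin m → ℕ}

lemma rowCountLt_le (s : ℕ) (a : Fin k) : rowCountLt T s a ≤ m :=
  (card_filter_le _ _).trans_eq (card_fin m)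

lemma rowCountLt_le_iff (hrow : ∀ a, Monotone fun b => T (a, b)) (s : ℕ) (a : Fin k)
    (b : Fin m) : rowCountLt T s a ≤ b ↔ s ≤ T (a, b) := by
  constructor
  · intro h
    by_contra! hlt
    have hsub : Iic b ⊆ ({b' | T (a, b') < s} : Finset (Fin m)) := fun b' hb' =>
      mem_filter.2 ⟨mem_univ _, (hrow a (mem_Iic.1 hb')).trans_lt hlt⟩
    have := card_le_card hsub
    rw [Fin.card_Iic] at this
    unfold rowCountLt at h
    omega
  · intro h
    have hsub : ({b' | T (a, b') < s} : Finset (Fin m)) ⊆ Iio b := fun b' hb' =>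
      mem_Iio.2 (lt_of_not_ge fun hle => (h.trans (hrow a hle)).not_gt (mem_filter.1 hb').2)
    exact (card_le_card hsub).trans_eq (Fin.card_Iio b)

lemma rowCountLt_mono (hcol : ∀ b, Antitone fun a => T (a, b)) (s : ℕ) :
    Monotone (rowCountLt T s) := fun _ _ haa' =>
  card_le_card fun b hb => mem_filter.2 ⟨mem_univ _, (hcol b haa').trans_lt (mem_filter.1 hb).2⟩

lemma levelTuple_mono : Monotone (levelTuple T) := fun _ _ hss' _ =>
  Nat.add_le_add_left (card_le_card fun _ hb =>
    mem_filter.2 ⟨mem_univ _, (mem_filter.1 hb).2.trans_le hss'⟩) _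

lemma chi_levelTuple (hrow : ∀ a, Monotone fun b => T (a, b)) (s : ℕ) (p : Fin k × Fin m) :
    chi m (levelTuple T s) p = if s ≤ T p then 1 else 0 := by
  obtain ⟨a, b⟩ := p
  refine if_congr ?_ rfl rfl
  rw [← rowCountLt_le_iff hrow s a b]
  simp only [levelTuple]
  omega

end LevelTuple

section LevelMultiset

variable {n k m : ℕ}

lemma levelTuple_isVkn (hkn : k ≤ n) {T : Fin k × Fin (n - k) → ℕ}
    (hcol : ∀ b, Antitone fun a => T (a, b)) (s : ℕ) :
    IsVkn n (levelTuple T s) := by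
  refine ⟨fun a a' haa' => ?_, fun a => ?_⟩
  · have := rowCountLt_mono hcol s haa'.le
    have : (a : ℕ) < a' := haa'
    simp only [levelTuple]
    omega
  · have := rowCountLt_le (T := T) s a
    have := a.isLt
    simp only [levelTuple]
    omega

lemma levelTuple_ne_topVec {T : Fin k × Fin (n - k) → ℕ}
    (hrow : ∀ a, Monotone fun b => T (a, b)) {s : ℕ} {p : Fin k × Fin (n - k)} (hs : s ≤ T p) : levelTuple T s ≠ TopVec n k := by
  intro htop
  have := congrFun htop p.1
  have := (rowCountLt_le_iff hrow s p.1 p.2).2 hs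
  have := p.2.isLt
  simp only [levelTuple, TopVec] at *
  omega

def levelMultiset (T : Fin k × Fin m → ℕ) : Multiset (Fin k → ℕ) :=
  (Icc 1 (univ.sup T)).val.map (levelTuple T)

lemma levelMultiset_le_or_le (T : Fin k × Fin m → ℕ) :
    ∀ I ∈ levelMultiset T, ∀ J ∈ levelMultiset T, I ≤ J ∨ J ≤ I := by
  simp only [levelMultiset, Multiset.mem_map, forall_exists_index, and_imp]
  rintro _ s - rfl _ s' - rfl
  exact (le_total s s').imp (levelTuple_mono ·) (levelTuple_mono ·)

lemma sum_chi_levelMultiset {T : Fin k × Fin m → ℕ} (hrow : ∀ a, Monotone fun b => T (a, b)) :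
    ((levelMultiset T).map (chi m)).sum = T := by
  funext p
  have hfilter : {s ∈ Icc 1 (univ.sup T) | s ≤ T p} = Icc 1 (T p) := by
    ext s
    have := le_sup (f := T) (mem_univ p)
    simp only [mem_filter, mem_Icc]
    omega
  rw [Pi.multiset_sum_apply, levelMultiset, Multiset.map_map, Multiset.map_map]
  change ∑ s ∈ Icc 1 (univ.sup T), chi m (levelTuple T s) p = T p
  simp only [chi_levelTuple hrow, sum_boole, hfilter, Nat.card_Icc, Nat.cast_id]
  omega

lemma mem_levelMultiset_vStar (hkn : k ≤ n) {T : Fin k × Fin (n - k) → ℕ}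
    (hrow : ∀ a, Monotone fun b => T (a, b)) (hcol : ∀ b, Antitone fun a => T (a, b)) :
    ∀ I ∈ levelMultiset T, IsVkn n I ∧ I ≠ TopVec n k := by
  simp only [levelMultiset, Multiset.mem_map, mem_val, mem_Icc, forall_exists_index, and_imp]
  rintro _ s hs₁ hs₂ rfl
  obtain ⟨p, -, hp⟩ := (Finset.le_sup_iff (by rw [Nat.bot_eq_zero]; omega)).1 hs₂
  exact ⟨levelTuple_isVkn hkn hcol s, levelTuple_ne_topVec hrow hp⟩

end LevelMultiset

lemma Multiset.exists_forall_le_of_le_or_le {α : Type*} [PartialOrder α] {M : Multiset α}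
    (hM : M ≠ 0) (hc : ∀ x ∈ M, ∀ y ∈ M, x ≤ y ∨ y ≤ x) : ∃ x ∈ M, ∀ y ∈ M, x ≤ y := by
  classical
  obtain ⟨x, hx⟩ := M.toFinset.exists_minimal (Multiset.toFinset_nonempty.2 hM)
  have hxM : x ∈ M := Multiset.mem_toFinset.1 hx.prop
  exact ⟨x, hxM, fun y hy => (hc x hxM y hy).elim id (hx.2 (Multiset.mem_toFinset.2 hy))⟩

lemma pairwise_nonNesting_iff {k : ℕ} {M : Multiset (Fin k → ℕ)} (hM : ∀ I ∈ M, StrictMono I) :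
    (∀ I ∈ M, ∀ J ∈ M, NonNesting I J) ↔ ∀ I ∈ M, ∀ J ∈ M, I ≤ J ∨ J ≤ I :=
  forall₂_congr fun I hI => forall₂_congr fun J hJ => nonNesting_iff_le_or_le (hM I hI) (hM J hJ)

section Uniqueness

variable {n k m : ℕ}

lemma chi_eq_zero_iff_sum_eq_zero {M : Multiset (Fin k → ℕ)} {I : Fin k → ℕ} (hI : I ∈ M)
    (hleast : ∀ J ∈ M, I ≤ J) (p : Fin k × Fin m) :
    chi m I p = 0 ↔ (M.map (chi m)).sum p = 0 := by
  rw [Pi.multiset_sum_apply, Multiset.map_map, Multiset.sum_eq_zero_iff]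
  simp only [Multiset.mem_map, forall_exists_index, and_imp, forall_apply_eq_imp_iff₂,
    Function.comp_apply]
  exact ⟨fun h J hJ => Nat.eq_zero_of_le_zero (h ▸ chi_le_chi_of_le (hleast J hJ) p),
    fun h => h I hI⟩

lemma eq_zero_of_sum_chi_eq_zero (hkn : k < n) {M : Multiset (Fin k → ℕ)}
    (hM : ∀ I ∈ M, IsVkn n I ∧ I ≠ TopVec n k) (h : (M.map (chi (n - k))).sum = 0) : M = 0 := by
  refine Multiset.eq_zero_of_forall_notMem fun I hI => ?_
  obtain ⟨p, hp⟩ := exists_chi_eq_one hkn (hM I hI).1 (hM I hI).2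
  rw [Multiset.sum_eq_zero_iff.1 h _ (Multiset.mem_map_of_mem _ hI)] at hp
  exact zero_ne_one hp

theorem eq_of_sum_chi_eq (hkn : k < n) {M M' : Multiset (Fin k → ℕ)}
    (hM : ∀ I ∈ M, IsVkn n I ∧ I ≠ TopVec n k) (hM' : ∀ I ∈ M', IsVkn n I ∧ I ≠ TopVec n k)
    (hc : ∀ I ∈ M, ∀ J ∈ M, I ≤ J ∨ J ≤ I) (hc' : ∀ I ∈ M', ∀ J ∈ M', I ≤ J ∨ J ≤ I)
    (h : (M.map (chi (n - k))).sum = (M'.map (chi (n - k))).sum) : M = M' := by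
  induction M using Multiset.strongInductionOn generalizing M' with
  | ih M ih =>
  rcases eq_or_ne M 0 with rfl | hne
  · exact (eq_zero_of_sum_chi_eq_zero hkn hM' (by simpa using h.symm)).symm
  rcases eq_or_ne M' 0 with rfl | hne'
  · exact eq_zero_of_sum_chi_eq_zero hkn hM (by simpa using h)
  obtain ⟨I, hI, hIleast⟩ := Multiset.exists_forall_le_of_le_or_le hne hc
  obtain ⟨I', hI', hI'least⟩ := Multiset.exists_forall_le_of_le_or_le hne' hc'
  -- both least elements have as characteristic vector the support of the common sum
  have hchi : chi (n - k) I = chi (n - k) I' := funext fun p => by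
    have := (chi_eq_zero_iff_sum_eq_zero hI hIleast p).trans
      (h ▸ chi_eq_zero_iff_sum_eq_zero hI' hI'least p).symm
    have := chi_le_one I p
    have := chi_le_one I' p
    omega
  obtain rfl : I = I' := chi_injOn hkn.le (hM I hI).1 (hM' I' hI').1 hchi
  have herase : M.erase I = M'.erase I :=
    ih _ (Multiset.erase_lt.2 hI)
      (fun J hJ => hM J (Multiset.mem_of_mem_erase hJ))
      (fun J hJ => hM' J (Multiset.mem_of_mem_erase hJ))
      (fun J hJ J' hJ' => hc J (Multiset.mem_of_mem_erase hJ) J' (Multiset.mem_of_mem_erase hJ'))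
      (fun J hJ J' hJ' => hc' J (Multiset.mem_of_mem_erase hJ) J' (Multiset.mem_of_mem_erase hJ'))
      (add_left_cancel (by rw [Multiset.sum_map_erase hI, Multiset.sum_map_erase hI', h]))
  rw [← Multiset.cons_erase hI, ← Multiset.cons_erase hI', herase]

end Uniqueness

theorem stmt7_general {n k : ℕ} (hkn : k < n)
    (T : Fin k × Fin (n - k) → ℕ) (hT : IsTableau T) :
    ∃! M : Multiset (Fin k → ℕ),
      (∀ I ∈ M, IsVkn n I ∧ I ≠ TopVec n k) ∧
      (∀ I ∈ M, ∀ J ∈ M, NonNesting I J) ∧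
      (M.map (chi (n - k))).sum = T := by
  have hrow : ∀ a, Monotone fun b => T (a, b) := fun a _ _ => hT.1 a _ _
  have hcol : ∀ b, Antitone fun a => T (a, b) := fun b _ _ => hT.2 _ _ b
  have hV := mem_levelMultiset_vStar hkn.le hrow hcol
  have hsum := sum_chi_levelMultiset hrow
  refine ⟨levelMultiset T, ⟨hV, ?_, hsum⟩, ?_⟩
  · exact (pairwise_nonNesting_iff fun I hI => (hV I hI).1.1).2 (levelMultiset_le_or_le T)
  · rintro M ⟨hM, hnn, hMsum⟩
    exact eq_of_sum_chi_eq hkn hM hV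
      ((pairwise_nonNesting_iff fun I hI => (hM I hI).1.1).1 hnn) (levelMultiset_le_or_le T)
      (hMsum.trans hsum.symm)

/-- every tableau of shape `k×(n−k)` is the summing tableau of a unique
multiset of pairwise nonnesting elements of `V*_{k,n}`. -/
theorem stmt7 {n k : ℕ} (hk : 0 < k) (hkn : k < n)
    (T : Fin k × Fin (n - k) → ℕ) (hT : IsTableau T) :
    ∃! M : Multiset (Fin k → ℕ),
      (∀ I ∈ M, IsVkn n I ∧ I ≠ TopVec n k) ∧
      (∀ I ∈ M, ∀ J ∈ M, NonNesting I J) ∧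
      (M.map (chi (n - k))).sum = T :=
  stmt7_general hkn T hT
end

section
/- Let 0 < k < n and let S ⊆ V_{k,n} be a set of pairwise nonnesting tuples that is maximal with respect to inclusion among pairwise nonnesting subsets of V_{k,n}. Then |S| = k(n−k) + 1. In other words, the nonnesting complex Δ^{NN}_{k,n} is pure of dimension k(n−k). -/
lemma aux_comparable {k : ℕ} {I J : Fin k → ℕ} (hI : StrictMono I) (hJ : StrictMono J)
    (h : NonNesting I J) : (∀ a, I a ≤ J a) ∨ (∀ a, J a ≤ I a) := by
  by_contra hc
  push_neg at hc
  obtain ⟨⟨a, ha⟩, b, hb⟩ := hc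
  rcases lt_trichotomy a b with h1 | h1 | h1
  · exact h a b h1 (Or.inr ⟨ha, hI h1, hb⟩)
  · subst h1; omega
  · exact h b a h1 (Or.inl ⟨hb, hJ h1, ha⟩)

lemma aux_nn_of_le {k : ℕ} {I J : Fin k → ℕ} (h : ∀ a, I a ≤ J a) :
    NonNesting I J ∧ NonNesting J I := by
  constructor <;>
  · intro a b hab hn
    have := h a; have := h b
    rcases hn with ⟨h1, h2, h3⟩ | ⟨h1, h2, h3⟩ <;> omega

lemma aux_lb {n k : ℕ} {I : Fin k → ℕ} (hI : IsVkn n I) : ∀ a : Fin k, a.val + 1 ≤ I a := by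
  have key : ∀ m (hm : m < k), m + 1 ≤ I ⟨m, hm⟩ := by
    intro m
    induction m with
    | zero => intro hm; exact (hI.2 _).1
    | succ p ih =>
      intro hm
      have hp : p < k := by omega
      have h1 := ih hp
      have h2 : I ⟨p, hp⟩ < I ⟨p + 1, hm⟩ := hI.1 (by simp [Fin.lt_def])
      omega
  intro a
  have := key a.val a.isLt
  simpa [Fin.eta] using this

lemma aux_step {n k : ℕ} {I : Fin k → ℕ} (hI : IsVkn n I) :
    ∀ d m (hm : m + d < k), I ⟨m, by omega⟩ + d ≤ I ⟨m + d, hm⟩ := by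
  intro d
  induction d with
  | zero => intro m hm; simp
  | succ p ih =>
    intro m hm
    have hp : m + p < k := by omega
    have h1 := ih m hp
    have h2 : I ⟨m + p, hp⟩ < I ⟨m + p + 1, by omega⟩ := hI.1 (by simp [Fin.lt_def])
    rw [show (⟨m + (p+1), hm⟩ : Fin k) = ⟨m + p + 1, by omega⟩ from rfl]
    omega

lemma aux_ub {n k : ℕ} (hkn : k ≤ n) {I : Fin k → ℕ} (hI : IsVkn n I) :
    ∀ a : Fin k, I a ≤ n - k + 1 + a.val := by
  intro a
  have ha := a.isLt
  have h1 := aux_step hI (k - 1 - a.val) a.val (by omega)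
  have h2 : I ⟨a.val + (k - 1 - a.val), by omega⟩ ≤ n := (hI.2 _).2
  have h3 : I ⟨a.val, by omega⟩ = I a := by simp [Fin.eta]
  omega

lemma aux_sum_lt {k : ℕ} {I J : Fin k → ℕ} (h : ∀ a, I a ≤ J a) (hne : I ≠ J) :
    ∑ a, I a < ∑ a, J a := by
  obtain ⟨a, ha⟩ : ∃ a, I a ≠ J a := by
    by_contra h'; push_neg at h'; exact hne (funext h')
  exact Finset.sum_lt_sum (fun i _ => h i) ⟨a, Finset.mem_univ a, lt_of_le_of_ne (h a) ha⟩

/-- the nonnesting complex `Δ^{NN}_{k,n}` is pure of dimension `k(n−k)`: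
every inclusion-maximal set of pairwise nonnesting elements of `V_{k,n}` has
cardinality `k(n−k) + 1`. -/
theorem stmt9 {n k : ℕ} (hk : 0 < k) (hkn : k < n)
    (S : Finset (Fin k → ℕ))
    (hV : ∀ I ∈ S, IsVkn n I)
    (hpair : ∀ I ∈ S, ∀ J ∈ S, NonNesting I J)
    (hmax : ∀ J : Fin k → ℕ, IsVkn n J →
      (∀ I ∈ S, NonNesting I J ∧ NonNesting J I) → J ∈ S) :
    S.card = k * (n - k) + 1 := by
  classical
  set f : (Fin k → ℕ) → ℕ := fun I => ∑ a, I a with hf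
  have hcomp : ∀ I ∈ S, ∀ J ∈ S, (∀ a, I a ≤ J a) ∨ (∀ a, J a ≤ I a) := fun I hI J hJ =>
    aux_comparable (hV I hI).1 (hV J hJ).1 (hpair I hI J hJ)
  -- bottom and top elements
  set B : Fin k → ℕ := fun a => a.val + 1 with hB
  set T : Fin k → ℕ := fun a => n - k + 1 + a.val with hT
  have hBV : IsVkn n B := by
    refine ⟨fun x y hxy => ?_, fun a => ⟨le_add_self, ?_⟩⟩
    · have : x.val < y.val := hxy
      simp only [hB]; omega
    · have := a.isLt; simp only [hB]; omega
  have hTV : IsVkn n T := by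
    refine ⟨fun x y hxy => ?_, fun a => ⟨?_, ?_⟩⟩
    · have : x.val < y.val := hxy
      simp only [hT]; omega
    · simp only [hT]; omega
    · have := a.isLt; simp only [hT]; omega
  have hBle : ∀ I, IsVkn n I → ∀ a, B a ≤ I a := fun I hI a => aux_lb hI a
  have hTle : ∀ I, IsVkn n I → ∀ a, I a ≤ T a := fun I hI a => aux_ub (le_of_lt hkn) hI a
  have hBS : B ∈ S := hmax B hBV (fun I hI =>
    ((aux_nn_of_le (hBle I (hV I hI))).symm))
  have hTS : T ∈ S := hmax T hTV (fun I hI => aux_nn_of_le (hTle I (hV I hI)))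
  -- the sum map is injective on S
  have hinj : Set.InjOn f S := by
    intro I hI J hJ hfe
    by_contra hne
    rcases hcomp I hI J hJ with h | h
    · exact absurd hfe (Nat.ne_of_lt (aux_sum_lt h hne))
    · exact absurd hfe.symm (Nat.ne_of_lt (aux_sum_lt h (Ne.symm hne)))
  -- image of f is the full interval
  have key : S.image f = Finset.Icc (f B) (f T) := by
    apply Finset.Subset.antisymm
    · intro v hv
      rw [Finset.mem_image] at hv
      obtain ⟨I, hIS, rfl⟩ := hv
      rw [Finset.mem_Icc]
      exact ⟨Finset.sum_le_sum fun a _ => hBle I (hV I hIS) a,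
        Finset.sum_le_sum fun a _ => hTle I (hV I hIS) a⟩
    · intro v hv
      rw [Finset.mem_Icc] at hv
      by_contra hvS
      obtain ⟨I, hIS', hImax⟩ := Finset.exists_max_image
        (S.filter (fun K => f K ≤ v)) f
        ⟨B, Finset.mem_filter.mpr ⟨hBS, hv.1⟩⟩
      rw [Finset.mem_filter] at hIS'
      obtain ⟨hIS, hIle⟩ := hIS'
      obtain ⟨J, hJS', hJmin⟩ := Finset.exists_min_image
        (S.filter (fun K => v ≤ f K)) f
        ⟨T, Finset.mem_filter.mpr ⟨hTS, hv.2⟩⟩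
      rw [Finset.mem_filter] at hJS'
      obtain ⟨hJS, hJge⟩ := hJS'
      have hIv : f I < v := lt_of_le_of_ne hIle fun h =>
        hvS (Finset.mem_image.mpr ⟨I, hIS, h⟩)
      have hJv : v < f J := lt_of_le_of_ne hJge fun h =>
        hvS (Finset.mem_image.mpr ⟨J, hJS, h.symm⟩)
      have hsplit : ∀ K ∈ S, f K ≤ f I ∨ f J ≤ f K := by
        intro K hK
        rcases le_or_gt (f K) v with h | h
        · exact Or.inl (hImax K (Finset.mem_filter.mpr ⟨hK, h⟩))
        · exact Or.inr (hJmin K (Finset.mem_filter.mpr ⟨hK, le_of_lt h⟩))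
      have hIJ : ∀ a, I a ≤ J a := by
        rcases hcomp I hIS J hJS with h | h
        · exact h
        · intro a
          by_cases hne : J = I
          · subst hne; omega
          · have h2 : f J < f I := aux_sum_lt h hne
            omega
      have hne : I ≠ J := fun h => by rw [h] at hIv; omega
      -- the largest index where I and J differ
      set D : Finset (Fin k) := Finset.univ.filter (fun a => I a < J a) with hD
      have hDne : D.Nonempty := by
        obtain ⟨a, ha⟩ : ∃ a, I a ≠ J a := by
          by_contra h'; push_neg at h'; exact hne (funext h')
        exact ⟨a, Finset.mem_filter.mpr ⟨Finset.mem_univ a, lt_of_le_of_ne (hIJ a) ha⟩⟩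
      set a := D.max' hDne with haD
      have haIJ : I a < J a := (Finset.mem_filter.mp (D.max'_mem hDne)).2
      have hafter : ∀ b : Fin k, a < b → I b = J b := by
        intro b hb
        by_contra hbne
        have : b ∈ D := Finset.mem_filter.mpr
          ⟨Finset.mem_univ b, lt_of_le_of_ne (hIJ b) hbne⟩
        exact absurd (D.le_max' b this) (not_le.mpr hb)
      set M : Fin k → ℕ := Function.update I a (I a + 1) with hM
      have hMa : M a = I a + 1 := Function.update_self a (I a + 1) I
      have hMne : ∀ b : Fin k, b ≠ a → M b = I b := fun b hb =>
        Function.update_of_ne hb (I a + 1) I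
      have hIM : ∀ b, I b ≤ M b := by
        intro b
        by_cases hb : b = a
        · subst hb; rw [hMa]; omega
        · rw [hMne b hb]
      have hMJ : ∀ b, M b ≤ J b := by
        intro b
        by_cases hb : b = a
        · subst hb; rw [hMa]; omega
        · rw [hMne b hb]; exact hIJ b
      have hMV : IsVkn n M := by
        refine ⟨fun x y hxy => ?_, fun b =>
          ⟨le_trans ((hV I hIS).2 b).1 (hIM b), le_trans (hMJ b) ((hV J hJS).2 b).2⟩⟩
        · by_cases hy : y = a
          · subst hy
            have hx : x ≠ a := ne_of_lt hxy
            rw [hMne x hx, hMa]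
            have := (hV I hIS).1 hxy
            omega
          · by_cases hx : x = a
            · subst hx
              rw [hMa, hMne y hy]
              have h1 : I a + 1 ≤ J a := haIJ
              have h2 : J a < J y := (hV J hJS).1 hxy
              have h3 : I y = J y := hafter y hxy
              omega
            · rw [hMne x hx, hMne y hy]
              exact (hV I hIS).1 hxy
      have hMS : M ∈ S := by
        apply hmax M hMV
        intro K hK
        rcases hsplit K hK with h | h
        · have hKI : ∀ b, K b ≤ I b := by
            rcases hcomp K hK I hIS with h' | h'
            · exact h'
            · intro b
              by_cases hne' : I = K
              · subst hne'; omega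
              · have h2 : f I < f K := aux_sum_lt h' hne'
                omega
          exact aux_nn_of_le fun b => le_trans (hKI b) (hIM b)
        · have hJK : ∀ b, J b ≤ K b := by
            rcases hcomp J hJS K hK with h' | h'
            · exact h'
            · intro b
              by_cases hne' : K = J
              · subst hne'; omega
              · have h2 : f K < f J := aux_sum_lt h' hne'
                omega
          exact (aux_nn_of_le fun b => le_trans (hMJ b) (hJK b)).symm
      -- but f M = f I + 1 contradicts maximality of I
      have hfM : f M = f I + 1 := by
        have h1 : f M = (I a + 1) + ∑ b ∈ Finset.univ.erase a, I b := by
          show (∑ b, M b) = (I a + 1) + ∑ b ∈ Finset.univ.erase a, I b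
          rw [← Finset.add_sum_erase Finset.univ M (Finset.mem_univ a), hMa]
          congr 1
          exact Finset.sum_congr rfl fun b hb => hMne b (Finset.ne_of_mem_erase hb)
        have h2 : f I = I a + ∑ b ∈ Finset.univ.erase a, I b :=
          (Finset.add_sum_erase Finset.univ I (Finset.mem_univ a)).symm
        omega
      have hMle : f M ≤ v := by omega
      have := hImax M (Finset.mem_filter.mpr ⟨hMS, hMle⟩)
      omega
  -- conclude
  have hcard : S.card = (Finset.Icc (f B) (f T)).card := by
    rw [← key, Finset.card_image_of_injOn hinj]
  have hTB : f T = f B + k * (n - k) := by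
    have h1 : ∀ x : Fin k, T x = (n - k) + B x := by
      intro x; simp only [hT, hB]; omega
    show (∑ x, T x) = (∑ x, B x) + k * (n - k)
    rw [Finset.sum_congr rfl fun x _ => h1 x, Finset.sum_add_distrib,
      Finset.sum_const, Finset.card_univ, Fintype.card_fin, smul_eq_mul]
    ring
  rw [hcard, Nat.card_Icc]
  omega
end

section
/- Let 0 < k < n and let O_{k,n} ⊂ ℝ^{[k]×[n−k]} be the convex hull of the characteristic vectors {χ_I : I ∈ V_{k,n}}. Then for every point x ∈ O_{k,n} there exist a unique set S ⊆ V_{k,n} of pairwise noncrossing tuples and unique strictly positive coefficients (α_I)_{I ∈ S} with Σ_{I ∈ S} α_I = 1 and x = Σ_{I ∈ S} α_I χ_I. (This expresses that the noncrossing complex Δ^{NC}_{k,n} is a triangulation of the order polytope O_{k,n}.) -/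
/-- The characteristic vector `χ_I` as a real vector in `ℝ^{[k]×[m]}` (`m = n−k`),
in 0-based coordinates: `χ_I(a,b) = 1` iff `i_{a+1} ≤ a+b+1`. -/
noncomputable def chiR (m : ℕ) {k : ℕ} (I : Fin k → ℕ) : Fin k × Fin m → ℝ :=
  fun p => if I p.1 ≤ p.1.val + p.2.val + 1 then 1 else 0

/-!
The point `∑ α I • χ_I` depends on the weighted family `(S, α)` only through its marginals, the
distributions of the entries `I a`, whose distribution functions `χ` records. So it suffices to
show that every weighted family of strictly increasing tuples has the marginals of exactly one
noncrossing family.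

Both halves go by induction on `k`, appending a last entry to the noncrossing family of
truncations. Let `u` be the colex-largest truncation. A tuple of another fibre whose last entry
lies strictly between the last entry of `u` and a last entry in the fibre over `u` crosses that
element, so the fibre over `u` must take the lowest part of the last marginal above `u`'s last
entry, of total mass the weight of `u`. This forces the fibres one at a time in decreasing colex
order, and conversely this greedy choice is noncrossing.
-/

open Finset

namespace NoncrossingComplex

section Pushforward

lemma exists_forall_apply_lt {ι : Type*} (S : Finset ι) (f : ι → ℕ) : ∃ N, ∀ x ∈ S, f x < N :=
  ⟨S.sup f + 1, fun _ hx => Nat.lt_succ_of_le (le_sup hx)⟩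

variable {ι κ γ : Type*} [DecidableEq κ]

/-- For `f = (· a)` this is the `a`-th marginal of the weighted family `(S, w)`. -/
def pushforward (f : ι → κ) (S : Finset ι) (w : ι → ℝ) (y : κ) : ℝ :=
  ∑ x ∈ S with f x = y, w x

variable {f : ι → κ} {S T : Finset ι} {w w' : ι → ℝ}

lemma pushforward_nonneg (hw : ∀ x ∈ S, 0 ≤ w x) (y : κ) : 0 ≤ pushforward f S w y :=
  sum_nonneg fun x hx => hw x (mem_filter.1 hx).1

lemma le_pushforward (hw : ∀ x ∈ S, 0 ≤ w x) {x : ι} (hx : x ∈ S) :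
    w x ≤ pushforward f S w (f x) :=
  single_le_sum (fun x' hx' => hw x' (mem_filter.1 hx').1) (mem_filter.2 ⟨hx, rfl⟩)

lemma exists_mem_of_pushforward_ne_zero {y : κ} (h : pushforward f S w y ≠ 0) :
    ∃ x ∈ S, f x = y := by
  obtain ⟨x, hx, -⟩ := exists_ne_zero_of_sum_ne_zero h
  exact ⟨x, mem_filter.1 hx⟩

lemma exists_apply_eq_of_pushforward_eq {g : γ → κ} {U : Finset γ} {v : γ → ℝ}
    (hw : ∀ x ∈ S, 0 < w x) (h : pushforward f S w = pushforward g U v) {x : ι} (hx : x ∈ S) :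
    ∃ z ∈ U, g z = f x := by
  refine exists_mem_of_pushforward_ne_zero (w := v) ?_
  rw [← h]
  exact ((hw x hx).trans_le (le_pushforward (fun x hx => (hw x hx).le) hx)).ne'

lemma pushforward_eq_of_sum_range_eq {f : ι → ℕ} {g : γ → ℕ} {U : Finset γ} {v : γ → ℝ}
    (h : ∀ c, ∑ y ∈ range c, pushforward f S w y = ∑ y ∈ range c, pushforward g U v y) :
    pushforward f S w = pushforward g U v := by
  funext y
  have := h (y + 1)
  rwa [sum_range_succ, sum_range_succ, h y, add_right_inj] at this

lemma pushforward_empty : pushforward f ∅ w = 0 := by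
  funext y
  simp [pushforward]

lemma pushforward_eq_zero {y : κ} (h : ∀ x ∈ S, f x ≠ y) : pushforward f S w y = 0 :=
  sum_eq_zero fun x hx => absurd (mem_filter.1 hx).2 (h x (mem_filter.1 hx).1)

lemma pushforward_congr (hw : ∀ x ∈ S, w x = w' x) : pushforward f S w = pushforward f S w' := by
  funext y
  exact sum_congr rfl fun x hx => hw x (mem_filter.1 hx).1

lemma pushforward_mono (hw : ∀ x ∈ S, 0 ≤ w x) (hTS : T ⊆ S) (y : κ) :
    pushforward f T w y ≤ pushforward f S w y :=
  sum_le_sum_of_subset_of_nonneg (filter_subset_filter _ hTS)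
    fun x hx _ => hw x (mem_filter.1 hx).1

lemma pushforward_union [DecidableEq ι] (hST : Disjoint S T) :
    pushforward f (S ∪ T) w = pushforward f S w + pushforward f T w := by
  funext y
  simp only [pushforward, Pi.add_apply]
  rw [filter_union]
  exact sum_union (disjoint_filter_filter hST)

lemma pushforward_filter_add_filter_not [DecidableEq ι] (p : ι → Prop) [DecidablePred p] :
    pushforward f (S.filter p) w + pushforward f (S.filter fun x => ¬ p x) w =
      pushforward f S w := by
  rw [← pushforward_union (disjoint_filter_filter_not S S p), filter_union_filter_not_eq]

lemma sum_pushforward (R : Finset κ) :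
    ∑ y ∈ R, pushforward f S w y = ∑ x ∈ S with f x ∈ R, w x :=
  sum_fiberwise_eq_sum_filter S R f w

lemma sum_filter_eq_of_pushforward_eq {g : γ → κ} {U : Finset γ} {v : γ → ℝ} (p : κ → Prop)
    [DecidablePred p] (h : pushforward f S w = pushforward g U v) :
    ∑ x ∈ S with p (f x), w x = ∑ z ∈ U with p (g z), v z := by
  let R := (S.image f ∪ U.image g).filter p
  calc ∑ x ∈ S with p (f x), w x = ∑ y ∈ R, pushforward f S w y := by
        rw [sum_pushforward]
        refine sum_congr (filter_congr fun x hx => ⟨fun hp => mem_filter.2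
          ⟨mem_union_left _ (mem_image_of_mem f hx), hp⟩, fun h => (mem_filter.1 h).2⟩) ?_
        exact fun _ _ => rfl
    _ = ∑ y ∈ R, pushforward g U v y := by rw [h]
    _ = ∑ z ∈ U with p (g z), v z := by
        rw [sum_pushforward]
        refine sum_congr (filter_congr fun z hz => ⟨fun h => (mem_filter.1 h).2, fun hp =>
          mem_filter.2 ⟨mem_union_right _ (mem_image_of_mem g hz), hp⟩⟩) ?_
        exact fun _ _ => rfl

lemma sum_eq_of_pushforward_eq {g : γ → κ} {U : Finset γ} {v : γ → ℝ}
    (h : pushforward f S w = pushforward g U v) : ∑ x ∈ S, w x = ∑ z ∈ U, v z := by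
  simpa using sum_filter_eq_of_pushforward_eq (fun _ => True) h

lemma pushforward_filter_pos (hw : ∀ x ∈ S, 0 ≤ w x) :
    pushforward f (S.filter fun x => 0 < w x) w = pushforward f S w := by
  funext y
  rw [pushforward, pushforward, filter_comm]
  exact sum_filter_of_ne fun x hx hne =>
    (hw x (mem_filter.1 hx).1).lt_of_ne (Ne.symm hne)

lemma pushforward_comp [DecidableEq γ] {g : κ → γ} {U : Finset κ} {v : κ → ℝ}
    (hf : ∀ x ∈ S, f x ∈ U) (hv : ∀ y ∈ U, pushforward f S w y = v y) :
    pushforward (fun x => g (f x)) S w = pushforward g U v := by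
  funext z
  rw [pushforward, pushforward, ← sum_congr rfl fun y hy => hv y (mem_filter.1 hy).1,
    sum_pushforward]
  refine sum_congr (filter_congr fun x hx => ?_) fun _ _ => rfl
  simp [hf x hx]

lemma pushforward_apply_of_injOn (hf : Set.InjOn f S) {x : ι} (hx : x ∈ S) :
    pushforward f S w (f x) = w x :=
  sum_eq_single_of_mem x (mem_filter.2 ⟨hx, rfl⟩) fun _ hx' hne =>
    absurd (hf (mem_filter.1 hx').1 hx (mem_filter.1 hx').2) hne

lemma subset_of_pushforward_eq_of_injOn (hf : Set.InjOn f (↑S ∪ ↑T)) (hS : ∀ x ∈ S, 0 < w x)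
    (h : pushforward f S w = pushforward f T w') : S ⊆ T := by
  intro x hx
  have hne : pushforward f T w' (f x) ≠ 0 := by
    rw [← h, pushforward_apply_of_injOn (hf.mono Set.subset_union_left) hx]
    exact (hS x hx).ne'
  obtain ⟨x', hx', hxx'⟩ := exists_mem_of_pushforward_ne_zero hne
  rwa [hf (Set.mem_union_right _ hx') (Set.mem_union_left _ hx) hxx'] at hx'

lemma eq_of_pushforward_eq_of_injOn (hf : Set.InjOn f (↑S ∪ ↑T)) (hS : ∀ x ∈ S, 0 < w x)
    (hT : ∀ x ∈ T, 0 < w' x) (h : pushforward f S w = pushforward f T w') :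
    S = T ∧ ∀ x ∈ S, w x = w' x := by
  have hST : S = T := (subset_of_pushforward_eq_of_injOn hf hS h).antisymm
    (subset_of_pushforward_eq_of_injOn (Set.union_comm (↑S : Set ι) ↑T ▸ hf) hT h.symm)
  refine ⟨hST, fun x hx => ?_⟩
  rw [← pushforward_apply_of_injOn (w := w) (hf.mono Set.subset_union_left) hx, h,
    pushforward_apply_of_injOn (hf.mono Set.subset_union_right) (hST ▸ hx)]

end Pushforward

section Chunk

variable {μ F : ℕ → ℝ} {b N : ℕ} {M : ℝ}

/-- The mass `M` taken greedily from `μ`, starting just above `b`: its partial sums are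
`min M (∑ w ∈ Ico (b + 1) v, μ w)`. -/
def lowerChunk (μ : ℕ → ℝ) (b : ℕ) (M : ℝ) (v : ℕ) : ℝ :=
  min M (∑ w ∈ Ico (b + 1) (v + 1), μ w) - min M (∑ w ∈ Ico (b + 1) v, μ w)

structure IsLowerChunk (μ : ℕ → ℝ) (b : ℕ) (F : ℕ → ℝ) : Prop where
  nonneg : ∀ v, 0 ≤ F v
  le : ∀ v, F v ≤ μ v
  eq_zero_of_le : ∀ v ≤ b, F v = 0
  eq_of_lt : ∀ v w, b < v → v < w → F w ≠ 0 → F v = μ v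

lemma sum_Ico_le_sum_Ico (hμ : ∀ v, 0 ≤ μ v) {v w : ℕ} (h : v ≤ w) :
    ∑ u ∈ Ico (b + 1) v, μ u ≤ ∑ u ∈ Ico (b + 1) w, μ u :=
  sum_le_sum_of_subset_of_nonneg (Ico_subset_Ico_right h) fun u _ _ => hμ u

lemma lowerChunk_eq_zero_of_le {v : ℕ} (hv : v ≤ b) : lowerChunk μ b M v = 0 := by
  simp [lowerChunk, Ico_eq_empty_of_le (show v + 1 ≤ b + 1 by omega),
    Ico_eq_empty_of_le (show v ≤ b + 1 by omega)]

lemma lowerChunk_of_lt {v : ℕ} (hv : b < v) :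
    lowerChunk μ b M v =
      min M (∑ u ∈ Ico (b + 1) v, μ u + μ v) - min M (∑ u ∈ Ico (b + 1) v, μ u) := by
  rw [lowerChunk, sum_Ico_succ_top hv]

lemma isLowerChunk_lowerChunk (hμ : ∀ v, 0 ≤ μ v) : IsLowerChunk μ b (lowerChunk μ b M) where
  nonneg v := sub_nonneg.2 (min_le_min_left M (sum_Ico_le_sum_Ico hμ v.le_succ))
  le v := by
    rcases le_or_gt v b with hv | hv
    · rw [lowerChunk_eq_zero_of_le hv]; exact hμ v
    · rw [lowerChunk_of_lt hv]
      have := min_add_add_right M (∑ u ∈ Ico (b + 1) v, μ u) (μ v)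
      have := min_le_min_right (∑ u ∈ Ico (b + 1) v, μ u + μ v)
        (le_add_of_nonneg_right (hμ v) : M ≤ M + μ v)
      linarith
  eq_zero_of_le _ hv := lowerChunk_eq_zero_of_le hv
  eq_of_lt v w hbv hvw hw := by
    -- a nonzero value at `w` means the budget `M` is not yet spent below `w`
    have hlt : ∑ u ∈ Ico (b + 1) w, μ u < M := by
      by_contra! hM
      have := sum_Ico_le_sum_Ico (b := b) hμ w.le_succ
      exact hw (by rw [lowerChunk, min_eq_left hM, min_eq_left (hM.trans this), sub_self])
    have := sum_Ico_le_sum_Ico (b := b) hμ (show v + 1 ≤ w by omega)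
    rw [lowerChunk_of_lt hbv, ← sum_Ico_succ_top hbv, min_eq_right (by linarith),
      min_eq_right (by linarith [sum_Ico_le_sum_Ico (b := b) hμ v.le_succ]),
      sum_Ico_succ_top hbv, add_sub_cancel_left]

lemma sum_range_lowerChunk (hM : 0 ≤ M) (N : ℕ) :
    ∑ v ∈ range N, lowerChunk μ b M v = min M (∑ u ∈ Ico (b + 1) N, μ u) := by
  simp only [lowerChunk]
  rw [sum_range_sub (fun v => min M (∑ u ∈ Ico (b + 1) v, μ u))]
  simp [hM]

lemma lowerChunk_eq_zero_of_ge (hμ : ∀ v, 0 ≤ μ v) (hM : M ≤ ∑ u ∈ Ico (b + 1) N, μ u)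
    {v : ℕ} (hv : N ≤ v) : lowerChunk μ b M v = 0 := by
  have h₁ := hM.trans (sum_Ico_le_sum_Ico hμ hv)
  have h₂ := h₁.trans (sum_Ico_le_sum_Ico hμ v.le_succ)
  rw [lowerChunk, min_eq_left h₁, min_eq_left h₂, sub_self]

lemma sum_range_eq_sum_range_of_eq_zero (hF : ∀ v, N ≤ v → F v = 0) {v : ℕ}
    (hv : ∀ w, v ≤ w → F w = 0) : ∑ u ∈ range v, F u = ∑ u ∈ range N, F u := by
  rcases le_total v N with h | h
  · exact sum_subset (range_subset_range.2 h) fun u _ hu => hv u (by simpa using hu)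
  · exact (sum_subset (range_subset_range.2 h) fun u _ hu => hF u (by simpa using hu)).symm

lemma IsLowerChunk.eq_lowerChunk (hF : IsLowerChunk μ b F) (hFN : ∀ v, N ≤ v → F v = 0) :
    F = lowerChunk μ b (∑ v ∈ range N, F v) := by
  have hIco : ∀ v, ∑ u ∈ range v, F u = ∑ u ∈ Ico (b + 1) v, F u := fun v =>
    (sum_subset (fun u hu => by simp at hu ⊢; omega) fun u hv hu =>
      hF.eq_zero_of_le u (by simp at hv hu; omega)).symm
  have hpartial : ∀ v, ∑ u ∈ range v, F u =
      min (∑ u ∈ range N, F u) (∑ u ∈ Ico (b + 1) v, μ u) := by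
    intro v
    by_cases h : ∀ w, v ≤ w → F w = 0
    · rw [← sum_range_eq_sum_range_of_eq_zero hFN h, min_eq_left]
      rw [hIco]
      exact sum_le_sum fun u _ => hF.le u
    · obtain ⟨w, hvw, hw⟩ : ∃ w, v ≤ w ∧ F w ≠ 0 := by simpa using h
      have hwN : w < N := by by_contra! hN; exact hw (hFN w hN)
      have hfull : ∑ u ∈ Ico (b + 1) v, F u = ∑ u ∈ Ico (b + 1) v, μ u :=
        sum_congr rfl fun u hu => hF.eq_of_lt u w (by simp at hu; omega) (by simp at hu; omega) hw
      have hle : ∑ u ∈ range v, F u ≤ ∑ u ∈ range N, F u :=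
        sum_le_sum_of_subset_of_nonneg (range_subset_range.2 (by omega)) fun u _ _ => hF.nonneg u
      rw [min_eq_right (by rwa [← hfull, ← hIco]), ← hfull, hIco]
  funext v
  rw [lowerChunk, ← hpartial, ← hpartial, sum_range_succ, add_sub_cancel_left]

end Chunk

section Tuples

variable {k : ℕ}

lemma colex_lt_iff {w u : Fin k → ℕ} :
    toColex w < toColex u ↔ ∃ a, w a < u a ∧ ∀ l, a < l → w l = u l :=
  ⟨fun ⟨a, heq, hlt⟩ => ⟨a, hlt, heq⟩, fun ⟨a, hlt, heq⟩ => ⟨a, heq, hlt⟩⟩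

lemma exists_colex_max (D : Finset (Fin k → ℕ)) (hD : D.Nonempty) :
    ∃ u ∈ D, ∀ w ∈ D, w ≠ u → toColex w < toColex u := by
  obtain ⟨u, hu, hmax⟩ := D.exists_max_image toColex hD
  exact ⟨u, hu, fun w hw hne => (hmax w hw).lt_of_ne (by simpa using hne)⟩

lemma last_le_last_of_colex_lt {w u : Fin (k + 1) → ℕ} (h : toColex w < toColex u) :
    w (Fin.last k) ≤ u (Fin.last k) := by
  obtain ⟨a, hlt, heq⟩ := colex_lt_iff.1 h
  rcases (Fin.le_last a).lt_or_eq with ha | rfl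
  · exact (heq _ ha).le
  · exact hlt.le

lemma eq_of_init_eq_of_last_eq {t t' : Fin (k + 1) → ℕ} (hinit : Fin.init t = Fin.init t')
    (hlast : t (Fin.last k) = t' (Fin.last k)) : t = t' := by
  rw [← Fin.snoc_init_self t, ← Fin.snoc_init_self t', hinit, hlast]

lemma strictMono_of_init {t : Fin (k + 2) → ℕ} (h : StrictMono (Fin.init t))
    (hlast : t (Fin.last k).castSucc < t (Fin.last _)) : StrictMono t := by
  refine Fin.strictMono_iff_lt_succ.2 fun i => ?_
  rcases Fin.eq_castSucc_or_eq_last i with ⟨j, rfl⟩ | rfl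
  · rw [← Fin.castSucc_succ]
    exact h Fin.castSucc_lt_succ
  · rwa [Fin.succ_last]

lemma apply_add_le_apply_of_strictMono {I : Fin k → ℕ} (hI : StrictMono I) {a b : Fin k}
    (hab : a ≤ b) : I a + (b - a : ℕ) ≤ I b := by
  obtain ⟨d, hd⟩ : ∃ d, (b : ℕ) = a + d := ⟨b - a, by rw [Fin.le_def] at hab; omega⟩
  induction d generalizing b with
  | zero =>
    obtain rfl : b = a := Fin.ext (by simpa using hd)
    simp
  | succ d ih =>
    have hlt : (a : ℕ) + d < k := by omega
    have h₁ := ih (b := ⟨a + d, hlt⟩) (Fin.le_def.2 (by simp)) rfl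
    have h₂ := hI (show (⟨a + d, hlt⟩ : Fin k) < b by rw [Fin.lt_def]; simp only; omega)
    simp only at h₁
    omega

lemma cross_comm {i i' j j' : ℕ} : Cross i i' j j' ↔ Cross j j' i i' := by
  unfold Cross; tauto

lemma not_cross_self_left {i i' j' : ℕ} : ¬ Cross i i' i j' := by
  unfold Cross; omega

lemma _root_.NonCrossing.symm {I J : Fin k → ℕ} (h : NonCrossing I J) : NonCrossing J I :=
  fun a b hab hmid hcross =>
    h a b hab (fun l hal hlb => (hmid l hal hlb).symm) (cross_comm.1 hcross)

lemma nonCrossing_of_init_eq {I J : Fin (k + 1) → ℕ} (h : Fin.init I = Fin.init J) :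
    NonCrossing I J := by
  intro a b hab _
  obtain ⟨a, rfl⟩ := Fin.exists_castSucc_eq.2 (Fin.ne_last_of_lt hab)
  rw [show I a.castSucc = J a.castSucc from congrFun h a]
  exact not_cross_self_left

lemma nonCrossing_iff_init {I J : Fin (k + 1) → ℕ} :
    NonCrossing I J ↔ NonCrossing (Fin.init I) (Fin.init J) ∧
      ∀ a : Fin k, (∀ l : Fin k, a < l → I l.castSucc = J l.castSucc) →
        ¬ Cross (I a.castSucc) (I (Fin.last k)) (J a.castSucc) (J (Fin.last k)) := by
  constructor
  · intro h
    refine ⟨fun a b hab hmid => h _ _ (Fin.castSucc_lt_castSucc_iff.2 hab) fun l hal hlb => ?_,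
      fun a hmid => h _ _ (Fin.castSucc_lt_last a) fun l hal hlb => ?_⟩
    · obtain ⟨l, rfl⟩ := Fin.exists_castSucc_eq.2 (Fin.ne_last_of_lt hlb)
      exact hmid l (Fin.castSucc_lt_castSucc_iff.1 hal) (Fin.castSucc_lt_castSucc_iff.1 hlb)
    · obtain ⟨l, rfl⟩ := Fin.exists_castSucc_eq.2 (Fin.ne_last_of_lt hlb)
      exact hmid l (Fin.castSucc_lt_castSucc_iff.1 hal)
  · rintro ⟨hinit, hlast⟩ a b hab hmid
    obtain ⟨a, rfl⟩ := Fin.exists_castSucc_eq.2 (Fin.ne_last_of_lt hab)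
    rcases Fin.eq_castSucc_or_eq_last b with ⟨b, rfl⟩ | rfl
    · exact hinit a b (Fin.castSucc_lt_castSucc_iff.1 hab) fun l hal hlb =>
        hmid l.castSucc (Fin.castSucc_lt_castSucc_iff.2 hal) (Fin.castSucc_lt_castSucc_iff.2 hlb)
    · exact hlast a fun l hal => hmid l.castSucc (Fin.castSucc_lt_castSucc_iff.2 hal)
        (Fin.castSucc_lt_last l)

lemma exists_cross_last_iff {I J : Fin (k + 2) → ℕ} (hI : StrictMono I) (hJ : StrictMono J)
    (hJI : toColex (Fin.init J) < toColex (Fin.init I)) :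
    (∃ a : Fin (k + 1), (∀ l : Fin (k + 1), a < l → I l.castSucc = J l.castSucc) ∧
        Cross (I a.castSucc) (I (Fin.last _)) (J a.castSucc) (J (Fin.last _))) ↔
      I (Fin.last k).castSucc < J (Fin.last _) ∧ J (Fin.last _) < I (Fin.last _) := by
  obtain ⟨a₀, hlt, heq⟩ := colex_lt_iff.1 hJI
  simp only [Fin.init] at hlt heq
  constructor
  · rintro ⟨a, hagree, hcross⟩
    rcases lt_trichotomy a a₀ with ha | rfl | ha
    · exact absurd (hagree a₀ ha) hlt.ne'
    · refine hcross.elim (fun h => absurd h.1 hlt.not_gt) fun h => ⟨?_, h.2.2⟩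
      rcases (Fin.le_last a).lt_or_eq with ha | rfl
      · rw [← heq _ ha]
        exact hJ (Fin.castSucc_lt_last _)
      · exact h.2.1
    · rw [← heq a ha] at hcross
      exact absurd hcross not_cross_self_left
  · rintro ⟨h₁, h₂⟩
    refine ⟨a₀, fun l hl => (heq l hl).symm, Or.inr ⟨hlt, ?_, h₂⟩⟩
    exact lt_of_le_of_lt (hI.monotone (Fin.castSucc_le_castSucc_iff.2 (Fin.le_last a₀))) h₁

lemma nonCrossing_iff_of_colex_lt {I J : Fin (k + 2) → ℕ} (hI : StrictMono I)
    (hJ : StrictMono J) (hJI : toColex (Fin.init J) < toColex (Fin.init I)) :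
    NonCrossing I J ↔ NonCrossing (Fin.init I) (Fin.init J) ∧
      ¬ (I (Fin.last k).castSucc < J (Fin.last _) ∧ J (Fin.last _) < I (Fin.last _)) := by
  rw [nonCrossing_iff_init, ← exists_cross_last_iff hI hJ hJI]
  simp only [not_exists, not_and]

end Tuples

section Weighting

variable {k : ℕ}

structure IsNoncrossingWeighting (S : Finset (Fin k → ℕ)) (α : (Fin k → ℕ) → ℝ) : Prop where
  strictMono : ∀ I ∈ S, StrictMono I
  pos : ∀ I ∈ S, 0 < α I
  nonCrossing : ∀ I ∈ S, ∀ J ∈ S, NonCrossing I J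

variable {S T : Finset (Fin k → ℕ)} {α : (Fin k → ℕ) → ℝ}

lemma IsNoncrossingWeighting.mono (h : IsNoncrossingWeighting S α) (hTS : T ⊆ S) :
    IsNoncrossingWeighting T α where
  strictMono I hI := h.strictMono I (hTS hI)
  pos I hI := h.pos I (hTS hI)
  nonCrossing I hI J hJ := h.nonCrossing I (hTS hI) J (hTS hJ)

lemma IsNoncrossingWeighting.image_init {S : Finset (Fin (k + 1) → ℕ)}
    {α : (Fin (k + 1) → ℕ) → ℝ} (h : IsNoncrossingWeighting S α) :
    IsNoncrossingWeighting (S.image Fin.init) (pushforward Fin.init S α) where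
  strictMono := by
    simp only [mem_image, forall_exists_index, and_imp, forall_apply_eq_imp_iff₂]
    exact fun I hI => (h.strictMono I hI).comp Fin.strictMono_castSucc
  pos := by
    simp only [mem_image, forall_exists_index, and_imp, forall_apply_eq_imp_iff₂]
    exact fun I hI => (h.pos I hI).trans_le (le_pushforward (fun J hJ => (h.pos J hJ).le) hI)
  nonCrossing := by
    simp only [mem_image, forall_exists_index, and_imp, forall_apply_eq_imp_iff₂]
    exact fun I hI J hJ => (nonCrossing_iff_init.1 (h.nonCrossing I hI J hJ)).1

lemma pushforward_image_init (S : Finset (Fin (k + 1) → ℕ)) (α : (Fin (k + 1) → ℕ) → ℝ)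
    (a : Fin k) :
    pushforward (· a) (S.image Fin.init) (pushforward Fin.init S α) =
      pushforward (· a.castSucc) S α :=
  (pushforward_comp (S := S) (w := α) (g := fun u => u a) (fun _ => mem_image_of_mem Fin.init)
    fun _ _ => rfl).symm

end Weighting

section Existence

variable {k : ℕ}

noncomputable def snocFamily (u : Fin k → ℕ) (F : ℕ → ℝ) (N : ℕ) : Finset (Fin (k + 1) → ℕ) :=
  ((range N).filter fun v => F v ≠ 0).image fun v => (Fin.snoc u v : Fin (k + 1) → ℕ)

variable {u : Fin k → ℕ} {F : ℕ → ℝ} {N : ℕ}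

lemma mem_snocFamily {t : Fin (k + 1) → ℕ} :
    t ∈ snocFamily u F N ↔ Fin.init t = u ∧ t (Fin.last k) < N ∧ F (t (Fin.last k)) ≠ 0 := by
  constructor
  · rintro h
    obtain ⟨v, hv, rfl⟩ := mem_image.1 h
    simpa using hv
  · rintro ⟨rfl, h₁, h₂⟩
    exact mem_image.2 ⟨_, mem_filter.2 ⟨mem_range.2 h₁, h₂⟩, Fin.snoc_init_self t⟩

lemma pushforward_last_snocFamily (hF : ∀ v, N ≤ v → F v = 0) :
    pushforward (· (Fin.last k)) (snocFamily u F N) (fun t => F (t (Fin.last k))) = F := by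
  funext v
  by_cases hv : F v = 0
  · rw [hv]
    exact sum_eq_zero fun t ht => by rw [← hv]; exact congrArg F (mem_filter.1 ht).2
  have hvN : v < N := by
    by_contra! h
    exact hv (hF v h)
  have hinj : Set.InjOn (· (Fin.last k)) (snocFamily u F N : Set (Fin (k + 1) → ℕ)) := by
    intro t ht t' ht' h
    exact eq_of_init_eq_of_last_eq ((mem_snocFamily.1 ht).1.trans (mem_snocFamily.1 ht').1.symm) h
  have hmem : (Fin.snoc u v : Fin (k + 1) → ℕ) ∈ snocFamily u F N :=
    mem_snocFamily.2 (by simpa using ⟨hvN, hv⟩)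
  simpa using pushforward_apply_of_injOn (w := fun t => F (t (Fin.last k))) hinj hmem

lemma pushforward_init_snocFamily :
    pushforward Fin.init (snocFamily u F N) (fun t => F (t (Fin.last k))) u =
      ∑ v ∈ range N, F v := by
  rw [pushforward, filter_true_of_mem fun t ht => (mem_snocFamily.1 ht).1, snocFamily,
    sum_image fun v _ v' _ h => by simpa using congrFun h (Fin.last k)]
  simp only [Fin.snoc_last]
  exact sum_filter_ne_zero _

structure IsLift (B : Finset (Fin k → ℕ)) (β : (Fin k → ℕ) → ℝ) (ν : ℕ → ℝ)
    (S : Finset (Fin (k + 1) → ℕ)) (α : (Fin (k + 1) → ℕ) → ℝ) : Prop where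
  init_mem : ∀ t ∈ S, Fin.init t ∈ B
  pushforward_init : ∀ u ∈ B, pushforward Fin.init S α u = β u
  pushforward_last : pushforward (· (Fin.last k)) S α = ν

lemma IsLift.union_snocFamily {B : Finset (Fin k → ℕ)} {β : (Fin k → ℕ) → ℝ} {ν : ℕ → ℝ}
    {S : Finset (Fin (k + 1) → ℕ)} {α : (Fin (k + 1) → ℕ) → ℝ}
    (hS : IsLift (B.erase u) β (ν - F) S α) (hu : u ∈ B) (hF : ∀ v, N ≤ v → F v = 0)
    (hFβ : ∑ v ∈ range N, F v = β u) :
    IsLift B β ν (S ∪ snocFamily u F N)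
      ((snocFamily u F N).piecewise (fun t => F (t (Fin.last k))) α) := by
  have hinit : ∀ t ∈ S, Fin.init t ≠ u := fun t ht => (mem_erase.1 (hS.init_mem t ht)).1
  have hsplit : ∀ {κ : Type} [DecidableEq κ] (f : (Fin (k + 1) → ℕ) → κ),
      pushforward f (S ∪ snocFamily u F N)
          ((snocFamily u F N).piecewise (fun t => F (t (Fin.last k))) α) =
        pushforward f S α + pushforward f (snocFamily u F N) (fun t => F (t (Fin.last k))) := by
    intro κ _ f
    rw [pushforward_union (disjoint_left.2 fun t ht hf => hinit t ht (mem_snocFamily.1 hf).1),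
      pushforward_congr fun t ht => piecewise_eq_of_notMem _ _ _ fun hf =>
        hinit t ht (mem_snocFamily.1 hf).1,
      pushforward_congr (S := snocFamily u F N) fun t ht => piecewise_eq_of_mem _ _ _ ht]
  refine ⟨fun t ht => ?_, fun w hw => ?_, ?_⟩
  · rcases mem_union.1 ht with ht | ht
    · exact mem_of_mem_erase (hS.init_mem t ht)
    · rwa [(mem_snocFamily.1 ht).1]
  · rw [hsplit, Pi.add_apply]
    rcases eq_or_ne w u with rfl | hwu
    · rw [pushforward_eq_zero hinit, pushforward_init_snocFamily, hFβ, zero_add]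
    · rw [hS.pushforward_init w (mem_erase.2 ⟨hwu, hw⟩),
        pushforward_eq_zero fun t ht => (mem_snocFamily.1 ht).1.trans_ne hwu.symm, add_zero]
  · rw [hsplit, hS.pushforward_last, pushforward_last_snocFamily hF, sub_add_cancel]

lemma strictMono_of_mem_snocFamily {ν : ℕ → ℝ} {u : Fin (k + 1) → ℕ} (hu : StrictMono u)
    (hF : IsLowerChunk ν (u (Fin.last k)) F) {t : Fin (k + 2) → ℕ} (ht : t ∈ snocFamily u F N) :
    StrictMono t := by
  obtain ⟨hinit, -, hne⟩ := mem_snocFamily.1 ht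
  refine strictMono_of_init (hinit ▸ hu) ?_
  rw [show t (Fin.last k).castSucc = u (Fin.last k) from congrFun hinit _]
  by_contra! hle
  exact hne (hF.eq_zero_of_le _ hle)

lemma nonCrossing_of_mem_snocFamily {B : Finset (Fin (k + 1) → ℕ)}
    {β : (Fin (k + 1) → ℕ) → ℝ} {ν : ℕ → ℝ} {u : Fin (k + 1) → ℕ}
    {S : Finset (Fin (k + 2) → ℕ)} {α : (Fin (k + 2) → ℕ) → ℝ}
    (hS : IsNoncrossingWeighting S α) (hlift : IsLift (B.erase u) β (ν - F) S α)
    (hB : IsNoncrossingWeighting B β) (hu : u ∈ B)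
    (hmax : ∀ w ∈ B, w ≠ u → toColex w < toColex u) (hF : IsLowerChunk ν (u (Fin.last k)) F)
    {t s : Fin (k + 2) → ℕ} (ht : t ∈ snocFamily u F N) (hs : s ∈ S) : NonCrossing t s := by
  obtain ⟨hinit, -, hne⟩ := mem_snocFamily.1 ht
  obtain ⟨hsu, hsB⟩ := mem_erase.1 (hlift.init_mem s hs)
  rw [nonCrossing_iff_of_colex_lt (strictMono_of_mem_snocFamily (hB.strictMono u hu) hF ht)
    (hS.strictMono s hs) (hinit ▸ hmax _ hsB hsu), hinit,
    show t (Fin.last k).castSucc = u (Fin.last k) from congrFun hinit _]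
  refine ⟨hB.nonCrossing u hu _ hsB, fun ⟨h₁, h₂⟩ => ?_⟩
  -- `F` has used up all of `ν` at the last entry of `s`, so no mass is left for `s`
  have hpos := (hS.pos s hs).trans_le
    (le_pushforward (f := (· (Fin.last _))) (fun s hs => (hS.pos s hs).le) hs)
  rw [hlift.pushforward_last, Pi.sub_apply, hF.eq_of_lt _ _ h₁ h₂ hne, sub_self] at hpos
  exact hpos.false

lemma IsNoncrossingWeighting.union_snocFamily {B : Finset (Fin (k + 1) → ℕ)}
    {β : (Fin (k + 1) → ℕ) → ℝ} {ν : ℕ → ℝ} {u : Fin (k + 1) → ℕ}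
    {S : Finset (Fin (k + 2) → ℕ)} {α : (Fin (k + 2) → ℕ) → ℝ}
    (hS : IsNoncrossingWeighting S α) (hlift : IsLift (B.erase u) β (ν - F) S α)
    (hB : IsNoncrossingWeighting B β) (hu : u ∈ B)
    (hmax : ∀ w ∈ B, w ≠ u → toColex w < toColex u) (hF : IsLowerChunk ν (u (Fin.last k)) F) :
    IsNoncrossingWeighting (S ∪ snocFamily u F N)
      ((snocFamily u F N).piecewise (fun t => F (t (Fin.last _))) α) := by
  have hcross : ∀ {t s}, t ∈ snocFamily u F N → s ∈ S → NonCrossing t s :=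
    nonCrossing_of_mem_snocFamily hS hlift hB hu hmax hF
  refine ⟨fun t ht => ?_, fun t ht => ?_, fun t ht s hs => ?_⟩
  · rcases mem_union.1 ht with ht | ht
    exacts [hS.strictMono t ht, strictMono_of_mem_snocFamily (hB.strictMono u hu) hF ht]
  · rcases mem_union.1 ht with ht | ht
    · rw [piecewise_eq_of_notMem _ _ _ fun hf =>
        (mem_erase.1 (hlift.init_mem t ht)).1 (mem_snocFamily.1 hf).1]
      exact hS.pos t ht
    · rw [piecewise_eq_of_mem _ _ _ ht]
      exact (hF.nonneg _).lt_of_ne (mem_snocFamily.1 ht).2.2.symm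
  · rcases mem_union.1 ht with ht | ht <;> rcases mem_union.1 hs with hs | hs
    · exact hS.nonCrossing t ht s hs
    · exact (hcross hs ht).symm
    · exact hcross ht hs
    · exact nonCrossing_of_init_eq ((mem_snocFamily.1 ht).1.trans (mem_snocFamily.1 hs).1.symm)

def LastDominated (B : Finset (Fin (k + 1) → ℕ)) (β : (Fin (k + 1) → ℕ) → ℝ) (ν : ℕ → ℝ)
    (N : ℕ) : Prop :=
  ∀ c, ∑ w ∈ B with c ≤ w (Fin.last k), β w ≤ ∑ v ∈ Ico (c + 1) N, ν v

lemma LastDominated.erase {B : Finset (Fin (k + 1) → ℕ)} {β : (Fin (k + 1) → ℕ) → ℝ}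
    {ν : ℕ → ℝ} {u : Fin (k + 1) → ℕ} (h : LastDominated B β ν N) (hu : u ∈ B)
    (hmax : ∀ w ∈ B, w (Fin.last k) ≤ u (Fin.last k)) (hF : IsLowerChunk ν (u (Fin.last k)) F)
    (hFβ : ∑ v ∈ range N, F v = β u) : LastDominated (B.erase u) β (ν - F) N := by
  intro c
  rcases lt_or_ge (u (Fin.last k)) c with hc | hc
  · rw [sum_eq_zero fun w hw => absurd ((mem_filter.1 hw).2.trans (hmax w
      (mem_of_mem_erase (mem_filter.1 hw).1))) hc.not_ge]
    exact sum_nonneg fun v _ => sub_nonneg.2 (hF.le v)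
  · have hFc : ∑ v ∈ Ico (c + 1) N, F v = β u := by
      rw [← hFβ]
      refine sum_subset (fun v hv => by simp at hv ⊢; omega) fun v hv hv' => ?_
      exact hF.eq_zero_of_le v (by simp at hv hv'; omega)
    rw [filter_erase, sum_erase_eq_sub (mem_filter.2 ⟨hu, hc⟩)]
    simp only [Pi.sub_apply, sum_sub_distrib, hFc]
    linarith [h c]

theorem exists_lift (B : Finset (Fin (k + 1) → ℕ)) {β : (Fin (k + 1) → ℕ) → ℝ}
    (hB : IsNoncrossingWeighting B β) (ν : ℕ → ℝ) (hν : ∀ v, 0 ≤ ν v)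
    (hνN : ∀ v, N ≤ v → ν v = 0) (hdom : LastDominated B β ν N)
    (htot : ∑ w ∈ B, β w = ∑ v ∈ range N, ν v) :
    ∃ S α, IsNoncrossingWeighting S α ∧ IsLift B β ν S α := by
  induction B using Finset.strongInduction generalizing ν with
  | H B ih =>
  rcases B.eq_empty_or_nonempty with rfl | hne
  · have hν0 : ν = 0 := by
      funext v
      rcases lt_or_ge v N with hv | hv
      · exact (sum_eq_zero_iff_of_nonneg fun v _ => hν v).1 (by simpa using htot.symm) v
          (mem_range.2 hv)
      · exact hνN v hv
    exact ⟨∅, 0, ⟨by simp, by simp, by simp⟩, ⟨by simp, by simp, by rw [pushforward_empty, hν0]⟩⟩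
  -- the colex-largest tuple takes the lowest available mass of `ν` above its last entry
  obtain ⟨u, hu, hmax⟩ := exists_colex_max B hne
  have hM : β u ≤ ∑ v ∈ Ico (u (Fin.last k) + 1) N, ν v :=
    (single_le_sum (fun w hw => (hB.pos w (mem_filter.1 hw).1).le)
      (mem_filter.2 ⟨hu, le_rfl⟩ : u ∈ B.filter fun w => u (Fin.last k) ≤ w (Fin.last k))).trans
      (hdom _)
  have hF := isLowerChunk_lowerChunk (b := u (Fin.last k)) (M := β u) hν
  have hFN := fun v (hv : N ≤ v) => lowerChunk_eq_zero_of_ge hν hM hv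
  have hFβ : ∑ v ∈ range N, lowerChunk ν (u (Fin.last k)) (β u) v = β u := by
    rw [sum_range_lowerChunk (hB.pos u hu).le, min_eq_left hM]
  have hlast : ∀ w ∈ B, w (Fin.last k) ≤ u (Fin.last k) := fun w hw => by
    rcases eq_or_ne w u with rfl | hwu
    exacts [le_rfl, last_le_last_of_colex_lt (hmax w hw hwu)]
  obtain ⟨S, α, hS, hlift⟩ := ih (B.erase u) (erase_ssubset hu) (hB.mono (erase_subset u B))
    (ν - lowerChunk ν (u (Fin.last k)) (β u)) (fun v => sub_nonneg.2 (hF.le v))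
    (fun v hv => by simp [hνN v hv, hFN v hv]) (hdom.erase hu hlast hF hFβ)
    (by rw [sum_erase_eq_sub hu, htot, Pi.sub_def, sum_sub_distrib, hFβ])
  exact ⟨_, _, hS.union_snocFamily hlift hB hu hmax hF, hlift.union_snocFamily hu hFN hFβ⟩

lemma lastDominated_of_pushforward_eq {S₀ : Finset (Fin (k + 2) → ℕ)}
    {α₀ : (Fin (k + 2) → ℕ) → ℝ} {B : Finset (Fin (k + 1) → ℕ)} {β : (Fin (k + 1) → ℕ) → ℝ}
    (hmono : ∀ I ∈ S₀, StrictMono I) (hα₀ : ∀ I ∈ S₀, 0 ≤ α₀ I)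
    (hN : ∀ I ∈ S₀, I (Fin.last _) < N)
    (h : pushforward (· (Fin.last k)) B β = pushforward (· (Fin.last k).castSucc) S₀ α₀) :
    LastDominated B β (pushforward (· (Fin.last _)) S₀ α₀) N := by
  intro c
  rw [sum_filter_eq_of_pushforward_eq (c ≤ ·) h, sum_pushforward]
  refine sum_le_sum_of_subset_of_nonneg (fun I hI => ?_) fun I hI _ => hα₀ I (mem_filter.1 hI).1
  obtain ⟨hI, hc⟩ := mem_filter.1 hI
  have := hmono I hI (Fin.castSucc_lt_last (Fin.last k))
  exact mem_filter.2 ⟨hI, mem_Ico.2 ⟨by omega, hN I hI⟩⟩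

theorem exists_isNoncrossingWeighting (S₀ : Finset (Fin (k + 1) → ℕ))
    (α₀ : (Fin (k + 1) → ℕ) → ℝ) (hmono : ∀ I ∈ S₀, StrictMono I) (hα₀ : ∀ I ∈ S₀, 0 ≤ α₀ I) :
    ∃ S α, IsNoncrossingWeighting S α ∧ ∀ a, pushforward (· a) S α = pushforward (· a) S₀ α₀ := by
  induction k with
  | zero =>
    refine ⟨S₀.filter (0 < α₀ ·), α₀, ⟨fun I hI => hmono I (mem_filter.1 hI).1,
      fun I hI => (mem_filter.1 hI).2, fun _ _ _ _ a b hab => ?_⟩,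
      fun _ => pushforward_filter_pos hα₀⟩
    exact absurd hab (by rw [Fin.lt_def]; omega)
  | succ k ih =>
    obtain ⟨B, β, hB, hBS₀⟩ := ih (S₀.image Fin.init) (pushforward Fin.init S₀ α₀)
      (forall_mem_image.2 fun I hI => (hmono I hI).comp Fin.strictMono_castSucc)
      fun _ _ => pushforward_nonneg hα₀ _
    have hmarg : ∀ a, pushforward (· a) B β = pushforward (· a.castSucc) S₀ α₀ := fun a =>
      (hBS₀ a).trans (pushforward_image_init S₀ α₀ a)
    obtain ⟨N, hN⟩ := exists_forall_apply_lt S₀ (· (Fin.last _))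
    have hνN : ∀ v, N ≤ v → pushforward (· (Fin.last _)) S₀ α₀ v = 0 := fun v hv =>
      pushforward_eq_zero fun I hI => ((hN I hI).trans_le hv).ne
    have htot : ∑ w ∈ B, β w = ∑ v ∈ range N, pushforward (· (Fin.last _)) S₀ α₀ v := by
      rw [sum_eq_of_pushforward_eq (hmarg 0), sum_pushforward,
        filter_true_of_mem fun I hI => mem_range.2 (hN I hI)]
    obtain ⟨S, α, hS, hlift⟩ := exists_lift B hB _ (pushforward_nonneg hα₀) hνN
      (lastDominated_of_pushforward_eq hmono hα₀ hN (hmarg _)) htot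
    refine ⟨S, α, hS, fun a => ?_⟩
    cases a using Fin.lastCases with
    | last => exact hlift.pushforward_last
    | cast a => exact (pushforward_comp hlift.init_mem hlift.pushforward_init).trans (hmarg a)

end Existence

section Uniqueness

variable {k : ℕ}

/-- A tuple outside the fibre over `u` whose last entry lay strictly between `u`'s last entry
and a last entry in the fibre would cross that fibre element. -/
lemma isLowerChunk_fiber {T : Finset (Fin (k + 2) → ℕ)} {γ : (Fin (k + 2) → ℕ) → ℝ}
    {u : Fin (k + 1) → ℕ} (hT : IsNoncrossingWeighting T γ)
    (hmax : ∀ w ∈ T.image Fin.init, w ≠ u → toColex w < toColex u) :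
    IsLowerChunk (pushforward (· (Fin.last _)) T γ) (u (Fin.last k))
      (pushforward (· (Fin.last _)) (T.filter (Fin.init · = u)) γ) := by
  have hγ : ∀ t ∈ T, 0 ≤ γ t := fun t ht => (hT.pos t ht).le
  have hinit : ∀ t ∈ T.filter (Fin.init · = u), t (Fin.last k).castSucc = u (Fin.last k) :=
    fun t ht => congrFun (mem_filter.1 ht).2 _
  refine ⟨pushforward_nonneg fun t ht => hγ t (mem_filter.1 ht).1,
    pushforward_mono hγ (filter_subset _ _), fun v hv => pushforward_eq_zero fun t ht => ?_,
    fun v w hv hvw hw => ?_⟩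
  · have := hT.strictMono t (mem_filter.1 ht).1 (Fin.castSucc_lt_last (Fin.last k))
    rw [hinit t ht] at this
    exact (hv.trans_lt this).ne'
  obtain ⟨t, ht, rfl⟩ := exists_mem_of_pushforward_ne_zero hw
  have hrest : pushforward (· (Fin.last _)) (T.filter fun s => ¬ Fin.init s = u) γ v = 0 := by
    refine pushforward_eq_zero fun s hs hsv => ?_
    obtain ⟨hsT, hsu⟩ := mem_filter.1 hs
    obtain ⟨htT, htu⟩ := mem_filter.1 ht
    have hnc := (nonCrossing_iff_of_colex_lt (hT.strictMono t htT) (hT.strictMono s hsT)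
      (htu ▸ hmax _ (mem_image_of_mem _ hsT) hsu)).1 (hT.nonCrossing t htT s hsT)
    exact hnc.2 ⟨by rw [hinit t ht]; exact hsv ▸ hv, hsv ▸ hvw⟩
  rw [← pushforward_filter_add_filter_not (S := T) (Fin.init · = u), Pi.add_apply, hrest, add_zero]

lemma filter_init_eq_of_pushforward_eq {S S' : Finset (Fin (k + 2) → ℕ)}
    {α α' : (Fin (k + 2) → ℕ) → ℝ} {u : Fin (k + 1) → ℕ} (hS : IsNoncrossingWeighting S α)
    (hS' : IsNoncrossingWeighting S' α')
    (hlast : pushforward (· (Fin.last _)) S α = pushforward (· (Fin.last _)) S' α')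
    (himage : S.image Fin.init = S'.image Fin.init)
    (hmass : pushforward Fin.init S α u = pushforward Fin.init S' α' u)
    (hmax : ∀ w ∈ S.image Fin.init, w ≠ u → toColex w < toColex u) :
    S.filter (Fin.init · = u) = S'.filter (Fin.init · = u) ∧
      ∀ t ∈ S.filter (Fin.init · = u), α t = α' t := by
  obtain ⟨N, hN⟩ := exists_forall_apply_lt (S ∪ S') (· (Fin.last _))
  have hF := isLowerChunk_fiber hS hmax
  have hF' := isLowerChunk_fiber hS' (himage ▸ hmax)
  rw [← hlast] at hF'
  have hzero : ∀ {T : Finset (Fin (k + 2) → ℕ)} {γ : (Fin (k + 2) → ℕ) → ℝ}, T ⊆ S ∪ S' →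
      ∀ v, N ≤ v → pushforward (· (Fin.last _)) (T.filter (Fin.init · = u)) γ v = 0 :=
    fun hT v hv => pushforward_eq_zero fun t ht =>
      ((hN t (hT (mem_filter.1 ht).1)).trans_le hv).ne
  have hsum : ∀ {T : Finset (Fin (k + 2) → ℕ)} {γ : (Fin (k + 2) → ℕ) → ℝ}, T ⊆ S ∪ S' →
      ∑ v ∈ range N, pushforward (· (Fin.last _)) (T.filter (Fin.init · = u)) γ v =
        pushforward Fin.init T γ u := fun hT => by
    rw [sum_pushforward, filter_true_of_mem fun t ht => mem_range.2 (hN t (hT (mem_filter.1 ht).1))]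
    rfl
  have hFF' : pushforward (· (Fin.last _)) (S.filter (Fin.init · = u)) α =
      pushforward (· (Fin.last _)) (S'.filter (Fin.init · = u)) α' := by
    rw [hF.eq_lowerChunk (hzero subset_union_left), hF'.eq_lowerChunk (hzero subset_union_right),
      hsum subset_union_left, hsum subset_union_right, hmass]
  refine eq_of_pushforward_eq_of_injOn (fun t ht t' ht' h => eq_of_init_eq_of_last_eq ?_ h)
    (fun t ht => hS.pos t (mem_filter.1 ht).1) (fun t ht => hS'.pos t (mem_filter.1 ht).1) hFF'
  simp only [Set.mem_union, mem_coe, mem_filter] at ht ht'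
  rw [ht.elim (·.2) (·.2), ht'.elim (·.2) (·.2)]

theorem IsNoncrossingWeighting.eq_of_pushforward_eq {S S' : Finset (Fin (k + 1) → ℕ)}
    {α α' : (Fin (k + 1) → ℕ) → ℝ}
    (hS : IsNoncrossingWeighting S α) (hS' : IsNoncrossingWeighting S' α')
    (h : ∀ a, pushforward (· a) S α = pushforward (· a) S' α') :
    S = S' ∧ ∀ I ∈ S, α I = α' I := by
  induction k with
  | zero =>
    refine eq_of_pushforward_eq_of_injOn (fun I _ J _ hIJ => funext fun a => ?_) hS.pos hS'.pos
      (h 0)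
    rwa [Fin.fin_one_eq_zero a]
  | succ k ih =>
    induction S using Finset.strongInduction generalizing S' with
    | H S ihS =>
    obtain ⟨himage, hmass⟩ := ih hS.image_init hS'.image_init fun a => by
      rw [pushforward_image_init, pushforward_image_init, h]
    rcases S.eq_empty_or_nonempty with rfl | hne
    · obtain rfl : S' = ∅ := by simpa [eq_comm] using himage
      simp
    obtain ⟨u, hu, hmax⟩ := exists_colex_max _ (hne.image Fin.init)
    obtain ⟨hfib, hfibα⟩ :=
      filter_init_eq_of_pushforward_eq hS hS' (h _) himage (hmass u hu) hmax
    obtain ⟨t, ht, htu⟩ := mem_image.1 hu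
    obtain ⟨hrest, hrestα⟩ := ihS (S.filter fun x => ¬ Fin.init x = u)
      (filter_ssubset.2 ⟨t, ht, not_not.2 htu⟩) (hS.mono (filter_subset _ _))
      (hS'.mono (filter_subset _ _)) fun a => by
        have e := pushforward_filter_add_filter_not (f := (· a)) (S := S) (w := α) (Fin.init · = u)
        rw [h a, ← pushforward_filter_add_filter_not (S := S') (Fin.init · = u),
          pushforward_congr hfibα, hfib] at e
        exact (add_right_inj _).1 e
    refine ⟨by rw [← filter_union_filter_not_eq (Fin.init · = u) S,
      ← filter_union_filter_not_eq (Fin.init · = u) S', hfib, hrest], fun I hI => ?_⟩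
    by_cases hIu : Fin.init I = u
    exacts [hfibα I (mem_filter.2 ⟨hI, hIu⟩), hrestα I (mem_filter.2 ⟨hI, hIu⟩)]

end Uniqueness

section CharacteristicVectors

variable {k n : ℕ}

lemma _root_.IsVkn.bounds {I : Fin k → ℕ} (h : IsVkn n I) (a : Fin k) :
    (a : ℕ) + 1 ≤ I a ∧ I a ≤ a + 1 + (n - k) := by
  have hk := a.pos
  have h₀ := apply_add_le_apply_of_strictMono h.1 (show (⟨0, by omega⟩ : Fin k) ≤ a from
    Fin.le_def.2 (Nat.zero_le _))
  have h₁ := apply_add_le_apply_of_strictMono h.1 (show a ≤ ⟨k - 1, by omega⟩ from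
    Fin.le_def.2 (by simp; omega))
  have := (h.2 ⟨0, by omega⟩).1
  have := (h.2 ⟨k - 1, by omega⟩).2
  simp only at h₀ h₁
  omega

lemma sum_smul_chiR_apply {m : ℕ} {ι : Type*} (S : Finset ι) (w : ι → ℝ) (I : ι → Fin k → ℕ)
    (p : Fin k × Fin m) :
    (∑ i ∈ S, w i • chiR m (I i)) p = ∑ i ∈ S with I i p.1 ∈ range (p.1 + p.2 + 2), w i := by
  rw [Finset.sum_apply, sum_filter]
  refine sum_congr rfl fun i _ => ?_
  by_cases h : I i p.1 ≤ p.1 + p.2 + 1 <;> simp [chiR, h] <;> omega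

lemma sum_smul_chiR_eq_of_pushforward_eq {m : ℕ} {ι κ : Type*} {S : Finset ι} {T : Finset κ}
    {w : ι → ℝ} {v : κ → ℝ} {I : ι → Fin k → ℕ} {J : κ → Fin k → ℕ}
    (h : ∀ a, pushforward (fun i => I i a) S w = pushforward (fun j => J j a) T v) :
    ∑ i ∈ S, w i • chiR m (I i) = ∑ j ∈ T, v j • chiR m (J j) := by
  funext p
  rw [sum_smul_chiR_apply, sum_smul_chiR_apply]
  exact sum_filter_eq_of_pushforward_eq (· ∈ range (p.1 + p.2 + 2)) (h p.1)

/-- On `V_{k,n}`, the combination `∑ α I • χ_I` records the distribution functions of the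
marginals inside the window where they can change, so together with the total mass it
determines the marginals. -/
lemma pushforward_eq_of_sum_smul_chiR_eq {S S' : Finset (Fin k → ℕ)}
    {α α' : (Fin k → ℕ) → ℝ} (hS : ∀ I ∈ S, IsVkn n I) (hS' : ∀ I ∈ S', IsVkn n I)
    (htot : ∑ I ∈ S, α I = ∑ I ∈ S', α' I)
    (h : ∑ I ∈ S, α I • chiR (n - k) I = ∑ I ∈ S', α' I • chiR (n - k) I) (a : Fin k) :
    pushforward (· a) S α = pushforward (· a) S' α' := by
  refine pushforward_eq_of_sum_range_eq fun c => ?_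
  rw [sum_pushforward, sum_pushforward]
  rcases le_or_gt c (a + 1) with hc | hc
  · rw [filter_false_of_mem fun I hI => by simpa using (hc.trans ((hS I hI).bounds a).1).not_gt,
      filter_false_of_mem fun I hI => by simpa using (hc.trans ((hS' I hI).bounds a).1).not_gt,
      sum_empty, sum_empty]
  rcases le_or_gt (a + 2 + (n - k)) c with hc' | hc'
  · rw [filter_true_of_mem fun I hI => by simpa using by linarith [(hS I hI).bounds a],
      filter_true_of_mem fun I hI => by simpa using by linarith [(hS' I hI).bounds a], htot]
  have := congrFun h (a, ⟨c - a - 2, by omega⟩)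
  rwa [sum_smul_chiR_apply, sum_smul_chiR_apply, show (a : ℕ) + (c - a - 2) + 2 = c by omega]
    at this

end CharacteristicVectors

end NoncrossingComplex

open NoncrossingComplex in
theorem stmt11_general {n k : ℕ} (hk : 0 < k)
    (x : Fin k × Fin (n - k) → ℝ)
    (hx : x ∈ convexHull ℝ {y | ∃ I : Fin k → ℕ, IsVkn n I ∧ y = chiR (n - k) I}) :
    ∃ (S : Finset (Fin k → ℕ)) (α : (Fin k → ℕ) → ℝ),
      ((∀ I ∈ S, IsVkn n I) ∧ (∀ I ∈ S, ∀ J ∈ S, NonCrossing I J) ∧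
        (∀ I ∈ S, 0 < α I) ∧ (∑ I ∈ S, α I) = 1 ∧
        x = ∑ I ∈ S, α I • chiR (n - k) I) ∧
      ∀ (S' : Finset (Fin k → ℕ)) (α' : (Fin k → ℕ) → ℝ),
        ((∀ I ∈ S', IsVkn n I) ∧ (∀ I ∈ S', ∀ J ∈ S', NonCrossing I J) ∧
          (∀ I ∈ S', 0 < α' I) ∧ (∑ I ∈ S', α' I) = 1 ∧
          x = ∑ I ∈ S', α' I • chiR (n - k) I) →
        S' = S ∧ ∀ I ∈ S, α' I = α I := by
  obtain ⟨k, rfl⟩ : ∃ j, k = j + 1 := ⟨k - 1, by omega⟩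
  obtain ⟨ι, _, w, z, hw₀, hw₁, hz, rfl⟩ := mem_convexHull_iff_exists_fintype.1 hx
  choose I hI hzI using hz
  obtain ⟨S, α, hS, hmarg⟩ := exists_isNoncrossingWeighting (univ.image I) (pushforward I univ w)
    (forall_mem_image.2 fun i _ => (hI i).1) fun _ _ => pushforward_nonneg (fun i _ => hw₀ i) _
  have hmarg' : ∀ a, pushforward (· a) S α = pushforward (fun i => I i a) univ w := fun a =>
    (hmarg a).trans (pushforward_comp (g := (· a)) (fun i _ => mem_image_of_mem I (mem_univ i))
      fun _ _ => rfl).symm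
  have hsum : ∑ J ∈ S, α J = 1 := (sum_eq_of_pushforward_eq (hmarg' 0)).trans hw₁
  have hx : ∑ i, w i • z i = ∑ J ∈ S, α J • chiR (n - (k + 1)) J := by
    simp_rw [hzI]
    exact sum_smul_chiR_eq_of_pushforward_eq fun a => (hmarg' a).symm
  have hV : ∀ J ∈ S, IsVkn n J := fun J hJ => ⟨hS.strictMono J hJ, fun a => by
    obtain ⟨i, -, hi⟩ := exists_apply_eq_of_pushforward_eq hS.pos (hmarg' a) hJ
    exact hi ▸ (hI i).2 a⟩
  refine ⟨S, α, ⟨hV, hS.nonCrossing, hS.pos, hsum, hx⟩, ?_⟩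
  rintro S' α' ⟨hV', hNC', hpos', hsum', hx'⟩
  obtain ⟨hSS', hα⟩ := hS.eq_of_pushforward_eq ⟨fun J hJ => (hV' J hJ).1, hpos', hNC'⟩
    (pushforward_eq_of_sum_smul_chiR_eq hV hV' (hsum.trans hsum'.symm) (hx.symm.trans hx'))
  exact ⟨hSS'.symm, fun J hJ => (hα J hJ).symm⟩

/-- the noncrossing complex triangulates the order polytope
`O_{k,n} = conv{χ_I : I ∈ V_{k,n}}`: every point of `O_{k,n}` is in a unique way a
convex combination with strictly positive coefficients of the characteristic vectors
of a pairwise noncrossing subset of `V_{k,n}`. -/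
theorem stmt11 {n k : ℕ} (hk : 0 < k) (hkn : k < n)
    (x : Fin k × Fin (n - k) → ℝ)
    (hx : x ∈ convexHull ℝ {y | ∃ I : Fin k → ℕ, IsVkn n I ∧ y = chiR (n - k) I}) :
    ∃ (S : Finset (Fin k → ℕ)) (α : (Fin k → ℕ) → ℝ),
      ((∀ I ∈ S, IsVkn n I) ∧ (∀ I ∈ S, ∀ J ∈ S, NonCrossing I J) ∧
        (∀ I ∈ S, 0 < α I) ∧ (∑ I ∈ S, α I) = 1 ∧
        x = ∑ I ∈ S, α I • chiR (n - k) I) ∧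
      ∀ (S' : Finset (Fin k → ℕ)) (α' : (Fin k → ℕ) → ℝ),
        ((∀ I ∈ S', IsVkn n I) ∧ (∀ I ∈ S', ∀ J ∈ S', NonCrossing I J) ∧
          (∀ I ∈ S', 0 < α' I) ∧ (∑ I ∈ S', α' I) = 1 ∧
          x = ∑ I ∈ S', α' I • chiR (n - k) I) →
        S' = S ∧ ∀ I ∈ S, α' I = α I :=
  stmt11_general hk x hx
end
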